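/- arXiv:2312.09975 — 8 statements merged into one kernel-verified Lean document; each statement's English description precedes it below -/
import Mathlib

section
/- (Welch bound, inequality part) Let d and n be positive integers with n > d, and let F ∈ ℂ^{d×n} be a matrix whose columns f_1,…,f_n are unit vectors. Then the coherence max_{i≠j} |f_i* f_j| is at least μ := √((n−d)/(d(n−1))). -/
/-! The Gram matrix `G = Fᴴ F` and the frame operator `F Fᴴ` have the same Frobenius norm, since
both squared norms equal `tr (F Fᴴ F Fᴴ)`. The frame operator is a `d × d` matrix of trace
`tr G = n`, so Cauchy–Schwarz on its diagonal gives `‖G‖² ≥ n² / d`. On the other hand the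
diagonal of `G` contributes exactly `n` to `‖G‖²`, so the `n (n - 1)` off-diagonal entries carry
at least `n² / d - n`, and one of them has squared modulus at least the average
`(n - d) / (d (n - 1))`. -/

open Matrix

/-- The Welch bound parameter `μ = √((n−d)/(d(n−1)))`. -/
noncomputable def etfMu (d n : ℕ) : ℝ :=
  Real.sqrt (((n : ℝ) - d) / (d * ((n : ℝ) - 1)))

/-- `F` is an equiangular tight frame: unit-norm columns, pairwise inner products of
modulus equal to the Welch bound, and `F Fᴴ = (n/d) I`. -/
def IsETF {ι κ : Type} [Fintype ι] [Fintype κ] [DecidableEq ι] [DecidableEq κ]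
    (F : Matrix ι κ ℂ) : Prop :=
  (∀ j, (Fᴴ * F) j j = 1) ∧
  (∀ j k : κ, j ≠ k →
    ‖(Fᴴ * F) j k‖ = etfMu (Fintype.card ι) (Fintype.card κ)) ∧
  F * Fᴴ = ((Fintype.card κ : ℂ) / (Fintype.card ι : ℂ)) • 1

/-- `S` is the signature matrix of the ETF `F`, i.e. `S = (1/μ)(Fᴴ F − I)`. -/
def IsSignatureOf {ι κ : Type} [Fintype ι] [Fintype κ] [DecidableEq ι] [DecidableEq κ]
    (S : Matrix κ κ ℂ) (F : Matrix ι κ ℂ) : Prop :=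
  IsETF F ∧ S = ((etfMu (Fintype.card ι) (Fintype.card κ) : ℝ) : ℂ)⁻¹ • (Fᴴ * F - 1)

/-- A Hadamard matrix: `±1` entries and `Hᵀ H = m I`. -/
def IsHadamard {ι : Type} [Fintype ι] [DecidableEq ι] (H : Matrix ι ι ℝ) : Prop :=
  (∀ i j, H i j = 1 ∨ H i j = -1) ∧ Hᵀ * H = (Fintype.card ι : ℝ) • 1

/-- A skew Hadamard matrix: `H = C + I` with `Cᵀ = −C`. -/
def IsSkewHadamard {ι : Type} [Fintype ι] [DecidableEq ι] (H : Matrix ι ι ℝ) : Prop :=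
  _root_.IsHadamard H ∧ (H - 1)ᵀ = -(H - 1)

open Finset Fintype

theorem Fintype.sum_sum_eq_sum_diag_add_sum_offDiag {α M : Type*} [Fintype α] [DecidableEq α]
    [AddCommMonoid M] (f : α → α → M) :
    ∑ j, ∑ k, f j k = ∑ j, f j j + ∑ p ∈ univ.offDiag, f p.1 p.2 := by
  rw [← sum_product', ← diag_union_offDiag, sum_union (disjoint_diag_offDiag _)]
  simp [Finset.diag]

namespace Matrix

variable {𝕜 : Type*} [RCLike 𝕜] {ι κ : Type*} [Fintype ι] [Fintype κ]

theorem trace_conjTranspose_mul_self_eq_sum_norm_sq (A : Matrix ι κ 𝕜) :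
    (Aᴴ * A).trace = ((∑ i, ∑ j, ‖A i j‖ ^ 2 : ℝ) : 𝕜) := by
  rw [Finset.sum_comm]
  simp [Matrix.trace, Matrix.mul_apply, RCLike.conj_mul]

theorem sum_norm_sq_conjTranspose_mul_self_eq (F : Matrix ι κ 𝕜) :
    ∑ j, ∑ k, ‖(Fᴴ * F) j k‖ ^ 2 = ∑ i, ∑ l, ‖(F * Fᴴ) i l‖ ^ 2 := by
  apply RCLike.ofReal_injective (K := 𝕜)
  rw [← trace_conjTranspose_mul_self_eq_sum_norm_sq, ← trace_conjTranspose_mul_self_eq_sum_norm_sq,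
    conjTranspose_mul, conjTranspose_mul, conjTranspose_conjTranspose, Matrix.mul_assoc,
    trace_mul_comm]
  simp only [Matrix.mul_assoc]

theorem sq_norm_trace_le_card_mul_sum_norm_sq (A : Matrix ι ι 𝕜) :
    ‖A.trace‖ ^ 2 ≤ card ι * ∑ i, ∑ j, ‖A i j‖ ^ 2 :=
  calc ‖A.trace‖ ^ 2 ≤ (∑ i, ‖A i i‖) ^ 2 := by gcongr; exact norm_sum_le _ _
    _ ≤ card ι * ∑ i, ‖A i i‖ ^ 2 := sq_sum_le_card_mul_sum_sq
    _ ≤ card ι * ∑ i, ∑ j, ‖A i j‖ ^ 2 := by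
      gcongr with i
      exact single_le_sum (f := fun j ↦ ‖A i j‖ ^ 2) (fun _ _ ↦ by positivity) (mem_univ i)

theorem sq_card_le_card_mul_sum_norm_sq_conjTranspose_mul_self (F : Matrix ι κ 𝕜)
    (hunit : ∀ j, (Fᴴ * F) j j = 1) :
    (card κ : ℝ) ^ 2 ≤ card ι * ∑ j, ∑ k, ‖(Fᴴ * F) j k‖ ^ 2 := by
  have htrace : (F * Fᴴ).trace = card κ := by
    rw [trace_mul_comm]
    simp [Matrix.trace, hunit]
  calc (card κ : ℝ) ^ 2 = ‖(F * Fᴴ).trace‖ ^ 2 := by rw [htrace, RCLike.norm_natCast]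
    _ ≤ card ι * ∑ i, ∑ l, ‖(F * Fᴴ) i l‖ ^ 2 := sq_norm_trace_le_card_mul_sum_norm_sq _
    _ = card ι * ∑ j, ∑ k, ‖(Fᴴ * F) j k‖ ^ 2 := by rw [sum_norm_sq_conjTranspose_mul_self_eq]

theorem sum_norm_sq_eq_card_add_sum_offDiag [DecidableEq κ] (G : Matrix κ κ 𝕜)
    (hdiag : ∀ j, G j j = 1) :
    ∑ j, ∑ k, ‖G j k‖ ^ 2 = card κ + ∑ p ∈ univ.offDiag, ‖G p.1 p.2‖ ^ 2 := by
  rw [Fintype.sum_sum_eq_sum_diag_add_sum_offDiag (fun j k ↦ ‖G j k‖ ^ 2)]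
  simp [hdiag]

theorem card_sq_div_sub_card_le_sum_offDiag_norm_sq [DecidableEq κ] (F : Matrix ι κ 𝕜)
    (hunit : ∀ j, (Fᴴ * F) j j = 1) :
    (card κ : ℝ) ^ 2 / card ι - card κ ≤
      ∑ p ∈ univ.offDiag, ‖(Fᴴ * F) p.1 p.2‖ ^ 2 := by
  have hframe := sq_card_le_card_mul_sum_norm_sq_conjTranspose_mul_self F hunit
  rw [sum_norm_sq_eq_card_add_sum_offDiag _ hunit] at hframe
  rcases (card ι).eq_zero_or_pos with hι | hι
  · simp only [hι, CharP.cast_eq_zero, div_zero, zero_sub]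
    exact (neg_nonpos.2 (Nat.cast_nonneg _)).trans (by positivity)
  · rw [sub_le_iff_le_add, div_le_iff₀' (by exact_mod_cast hι)]
    linarith

end Matrix

/-- **Welch bound (inequality part).** For `n > d ≥ 1` and a matrix `F ∈ ℂ^{d×n}` with
unit-norm columns, the coherence `max_{i≠j} |fᵢ* fⱼ|` is at least
`μ = √((n−d)/(d(n−1)))`; i.e. some pair of distinct columns has inner product of modulus
at least `μ`. -/
theorem welch_bound_inequality (d n : ℕ) (hd : 0 < d) (hdn : d < n)
    (F : Matrix (Fin d) (Fin n) ℂ)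
    (hunit : ∀ j, (Fᴴ * F) j j = 1) :
    ∃ i j : Fin n, i ≠ j ∧
      Real.sqrt (((n : ℝ) - d) / (d * ((n : ℝ) - 1))) ≤ ‖(Fᴴ * F) i j‖ := by
  classical
  have hd' : (d : ℝ) ≠ 0 := by positivity
  have hn : (2 : ℝ) ≤ n := by exact_mod_cast (show 2 ≤ n by omega)
  set pairs := (univ : Finset (Fin n)).offDiag
  have hpairs : pairs.Nonempty := ⟨(⟨0, by omega⟩, ⟨1, by omega⟩), by simp [pairs]⟩
  have hsum : ∑ _p ∈ pairs, ((n : ℝ) - d) / (d * ((n : ℝ) - 1)) ≤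
      ∑ p ∈ pairs, ‖(Fᴴ * F) p.1 p.2‖ ^ 2 :=
    calc ∑ _p ∈ pairs, ((n : ℝ) - d) / (d * ((n : ℝ) - 1)) = (n : ℝ) ^ 2 / d - n := by
          rw [sum_const, offDiag_card, card_univ, Fintype.card_fin, nsmul_eq_mul,
            Nat.cast_sub (Nat.le_mul_self n), Nat.cast_mul]
          field_simp [show (n : ℝ) - 1 ≠ 0 by linarith]
      _ ≤ _ := by simpa using card_sq_div_sub_card_le_sum_offDiag_norm_sq F hunit
  obtain ⟨⟨i, j⟩, hij, hle⟩ := exists_le_of_sum_le hpairs hsum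
  exact ⟨i, j, (mem_offDiag.1 hij).2.2, (Real.sqrt_le_left (norm_nonneg _)).2 hle⟩
end

section
/- (Main result) Let d be a positive integer. If there exists a skew Hadamard matrix of order d+1, then there exists a complex equiangular tight frame of size d × 2d. -/
open Matrix

/-!
Normalising a skew Hadamard matrix of order `d + 1` so that its first column is all ones leaves a
skew core `C` of order `d`: `Cᵀ = -C`, off-diagonal entries `±1`, `C J = 0` and `C² = J - d I`,
where `J` is the all-ones matrix. The complex matrices `a I + b C + c J` then form a commutative
`*`-algebra. With `μ = 1 / √(2d - 1)`, `R = I + iμC`, `R' = I - iμC` and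
`Y = α (I + C) + iγ J` for suitable real `α`, `γ`, the matrix `[[R, Y], [Yᴴ, R']]` has unit
diagonal and off-diagonal entries of modulus `μ`, and `YᴴY = YYᴴ = R'R`. As `R = (R² + R'R) / 2`
is positive definite, `R = PᴴP` with `P` invertible, and `F = [P | (Pᴴ)⁻¹ Y]` has exactly that
Gram matrix while `F Fᴴ = P Pᴴ + P R' P⁻¹ = 2 I`.
-/

open scoped ComplexOrder

namespace Matrix

def allOnes {n α : Type*} [One α] : Matrix n n α := of fun _ _ => 1

theorem transpose_allOnes {n α : Type*} [One α] : (allOnes : Matrix n n α)ᵀ = allOnes := rfl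

theorem conjTranspose_allOnes {n α : Type*} [Semiring α] [StarRing α] :
    (allOnes : Matrix n n α)ᴴ = allOnes := by
  ext; simp [allOnes]

theorem map_allOnes {n α β : Type*} [One α] [One β] (f : α → β) (hf : f 1 = 1) :
    (allOnes : Matrix n n α).map f = allOnes := by
  ext; simp [allOnes, hf]

theorem allOnes_mul_allOnes {n α : Type*} [Fintype n] [Semiring α] :
    (allOnes : Matrix n n α) * allOnes = (Fintype.card n : α) • allOnes := by
  ext i j; simp [allOnes, mul_apply]

theorem posSemidef_allOnes {n 𝕜 : Type*} [Fintype n] [RCLike 𝕜] :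
    (allOnes : Matrix n n 𝕜).PosSemidef := by
  simpa [vecMulVec, allOnes] using posSemidef_vecMulVec_self_star (1 : n → 𝕜)

section PosDef
variable {n 𝕜 : Type*} [Fintype n] [DecidableEq n] [RCLike 𝕜]

theorem posDef_card_sub_one_smul_one_add_allOnes [Nonempty n] :
    (((Fintype.card n : 𝕜) - 1) • 1 + allOnes : Matrix n n 𝕜).PosDef := by
  rcases Nat.lt_or_ge 1 (Fintype.card n) with h | h
  · have hc : (0 : 𝕜) < (Fintype.card n : 𝕜) - 1 := by
      rw [sub_pos]; exact_mod_cast h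
    exact (PosDef.one.smul hc).add_posSemidef posSemidef_allOnes
  · have : Subsingleton n := Fintype.card_le_one_iff_subsingleton.mp h
    rw [le_antisymm h Fintype.card_pos, Nat.cast_one, sub_self, zero_smul, zero_add]
    convert PosDef.one (n := n) (R := 𝕜)
    ext i j
    obtain rfl := Subsingleton.elim i j
    simp [allOnes]

theorem PosDef.of_add_eq_smul_one {R R' : Matrix n n 𝕜} (hR : R.IsHermitian) {c : ℝ}
    (hc : 0 < c) (hRR' : R + R' = (c : 𝕜) • 1) (h : (R' * R).PosDef) : R.PosDef := by
  have hsum : Rᴴ * R + R' * R = (c : 𝕜) • R := by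
    rw [hR.eq, ← add_mul, hRR', Matrix.smul_mul, one_mul]
  have := (PosDef.posSemidef_add (posSemidef_conjTranspose_mul_self R) h).smul (inv_pos.mpr hc)
  rwa [hsum, RCLike.real_smul_eq_coe_smul (K := 𝕜), smul_smul, ← RCLike.ofReal_mul,
    inv_mul_cancel₀ hc.ne', RCLike.ofReal_one, one_smul] at this

end PosDef

open scoped MatrixOrder in
theorem PosDef.exists_isUnit_conjTranspose_mul {n : Type*} [Fintype n] [DecidableEq n]
    {R : Matrix n n ℂ} (h : R.PosDef) : ∃ P, IsUnit P ∧ Pᴴ * P = R := by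
  obtain ⟨P, hP, rfl⟩ :=
    CStarAlgebra.isStrictlyPositive_iff_eq_star_mul_self.mp h.isStrictlyPositive
  exact ⟨P, hP, rfl⟩

section Frame
variable {K n : Type*} [CommRing K] [StarRing K] [Fintype n] [DecidableEq n]
  {P R R' Y : Matrix n n K}

theorem conjTranspose_mul_self_fromCols_inv_mul (hP : IsUnit P) (hPR : Pᴴ * P = R)
    (hYR : Commute Y R) (hYY : Yᴴ * Y = R' * R) :
    (fromCols P ((Pᴴ)⁻¹ * Y))ᴴ * fromCols P ((Pᴴ)⁻¹ * Y) = fromBlocks R Y Yᴴ R' := by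
  have hPd : IsUnit P.det := (isUnit_iff_isUnit_det P).mp hP
  have hPHd : IsUnit Pᴴ.det := by rw [det_conjTranspose]; exact hPd.star
  have hR : IsUnit R.det := hPR ▸ (det_mul Pᴴ P ▸ hPHd.mul hPd)
  have hYR' : Y * R⁻¹ = R⁻¹ * Y := by
    rw [← nonsing_inv_mul_cancel_left R (Y * R⁻¹) hR, ← mul_assoc R, ← hYR.eq, mul_assoc,
      mul_nonsing_inv _ hR, mul_one]
  have hQQ : Yᴴ * P⁻¹ * (Pᴴ⁻¹ * Y) = R' := calc
    _ = Yᴴ * (Pᴴ * P)⁻¹ * Y := by simp only [Matrix.mul_inv_rev, mul_assoc]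
    _ = Yᴴ * Y * R⁻¹ := by rw [hPR, mul_assoc, ← hYR', mul_assoc]
    _ = R' := by rw [hYY, mul_assoc, mul_nonsing_inv _ hR, mul_one]
  rw [conjTranspose_fromCols_eq_fromRows_conjTranspose, fromRows_mul_fromCols,
    conjTranspose_mul, conjTranspose_nonsing_inv, conjTranspose_conjTranspose, hPR,
    mul_nonsing_inv_cancel_left _ _ hPHd, mul_assoc, nonsing_inv_mul _ hPd, mul_one, hQQ]

theorem mul_conjTranspose_self_fromCols_inv_mul (hP : IsUnit P) (hPR : Pᴴ * P = R) {c : K}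
    (hRR' : R + R' = c • 1) (hYY : Y * Yᴴ = R * R') :
    fromCols P ((Pᴴ)⁻¹ * Y) * (fromCols P ((Pᴴ)⁻¹ * Y))ᴴ = c • 1 := by
  have hPd : IsUnit P.det := (isUnit_iff_isUnit_det P).mp hP
  have hPHd : IsUnit Pᴴ.det := by rw [det_conjTranspose]; exact hPd.star
  have hQQ : Pᴴ⁻¹ * Y * (Pᴴ⁻¹ * Y)ᴴ = c • 1 - P * Pᴴ := calc
    _ = Pᴴ⁻¹ * (Pᴴ * P * R') * P⁻¹ := by
      rw [hPR, ← hYY, conjTranspose_mul, conjTranspose_nonsing_inv, conjTranspose_conjTranspose]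
      simp only [mul_assoc]
    _ = P * (c • 1 - Pᴴ * P) * P⁻¹ := by
      rw [mul_assoc Pᴴ, ← mul_assoc Pᴴ⁻¹, nonsing_inv_mul _ hPHd, one_mul, hPR, ← hRR',
        add_sub_cancel_left]
    _ = c • 1 - P * Pᴴ := by
      simp only [mul_sub, sub_mul, Matrix.mul_smul, Matrix.smul_mul, mul_one, mul_assoc,
        mul_nonsing_inv _ hPd]
  rw [conjTranspose_fromCols_eq_fromRows_conjTranspose, fromCols_mul_fromRows, hQQ,
    add_sub_cancel]

end Frame

end Matrix

section SkewCore
variable {n : Type*} [DecidableEq n]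

/-- For a skew Hadamard matrix normalised to have first column all ones, `C` is the block in
`H = [[1, -1ᵀ], [1, I + C]]`. -/
structure IsSkewCore [Fintype n] (C : Matrix n n ℝ) : Prop where
  transpose_eq_neg : Cᵀ = -C
  abs_apply_of_ne : ∀ ⦃i j⦄, i ≠ j → |C i j| = 1
  mul_allOnes : C * allOnes = 0
  mul_self : C * C = allOnes - (Fintype.card n : ℝ) • 1

noncomputable def coreComb (C : Matrix n n ℝ) (a b c : ℂ) : Matrix n n ℂ :=
  a • 1 + b • C.map Complex.ofRealHom + c • allOnes

theorem coreComb_apply (C : Matrix n n ℝ) (a b c : ℂ) (i j : n) :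
    coreComb C a b c i j = (if i = j then a else 0) + b * C i j + c := by
  simp [coreComb, one_apply, allOnes]

end SkewCore

section SkewHadamard
variable {ι : Type} [Fintype ι] [DecidableEq ι] {H : Matrix ι ι ℝ}

theorem IsSkewHadamard.transpose_eq (hH : IsSkewHadamard H) : Hᵀ = 2 - H := by
  have h := hH.2
  rw [transpose_sub, transpose_one] at h
  rw [← sub_add_cancel Hᵀ 1, h, ← one_add_one_eq_two]
  abel

theorem IsSkewHadamard.sub_one_mul_self (hH : IsSkewHadamard H) :
    (H - 1) * (H - 1) = -((Fintype.card ι : ℝ) - 1) • 1 := by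
  have h : (2 - H) * H = (Fintype.card ι : ℝ) • 1 := hH.transpose_eq ▸ hH.1.2
  rw [neg_sub, sub_smul, one_smul, ← h]
  noncomm_ring

theorem IsSkewHadamard.diagonal_mul_mul_diagonal (hH : IsSkewHadamard H) {s : ι → ℝ}
    (hs : ∀ i, s i = 1 ∨ s i = -1) : IsSkewHadamard (diagonal s * H * diagonal s) := by
  set D := diagonal s
  have hD : Dᵀ = D := diagonal_transpose s
  have hDD : D * D = 1 := by
    rw [diagonal_mul_diagonal, ← diagonal_one]
    congr 1; ext i; rcases hs i with h | h <;> simp [h]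
  refine ⟨⟨fun i j => ?_, ?_⟩, ?_⟩
  · simp only [D, diagonal_mul, mul_diagonal]
    rcases hs i with hi | hi <;> rcases hs j with hj | hj <;> rcases hH.1.1 i j with h | h <;>
      simp [hi, hj, h]
  · calc (D * H * D)ᵀ * (D * H * D) = D * (Hᵀ * H) * D := by
          rw [transpose_mul, transpose_mul, hD]
          simp only [mul_assoc]; rw [← mul_assoc D D, hDD, one_mul]
      _ = (Fintype.card ι : ℝ) • 1 := by
          rw [hH.1.2, Matrix.mul_smul, mul_one, Matrix.smul_mul, hDD]
  · rw [transpose_sub, transpose_mul, transpose_mul, hD, hH.transpose_eq, transpose_one]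
    calc _ = 2 • (D * D) - D * H * D - 1 := by noncomm_ring
      _ = -(D * H * D - 1) := by rw [hDD]; noncomm_ring

end SkewHadamard

theorem IsSkewHadamard.isSkewCore_submatrix_succ {d : ℕ}
    {H : Matrix (Fin (d + 1)) (Fin (d + 1)) ℝ} (hH : IsSkewHadamard H) (hcol : ∀ i, H i 0 = 1) :
    IsSkewCore ((H - 1).submatrix Fin.succ Fin.succ) := by
  set S := H - 1
  have hskew : Sᵀ = -S := hH.2
  have hSS : S * S = -(d : ℝ) • 1 := by simpa using hH.sub_one_mul_self
  have hS : ∀ i j, S j i = -S i j := fun i j => by simpa using congr_fun₂ hskew i j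
  have hS00 : S 0 0 = 0 := by linarith [hS 0 0]
  have hS_col : ∀ i : Fin d, S i.succ 0 = 1 := by simp [S, hcol, Fin.succ_ne_zero]
  have hsum : ∀ (i : Fin d) x, ∑ k : Fin d, S i.succ k.succ * S k.succ x =
      (S * S) i.succ x - S i.succ 0 * S 0 x := by
    intro i x; rw [mul_apply, Fin.sum_univ_succ]; ring
  refine ⟨by rw [transpose_submatrix, hskew]; rfl, fun i j hij => ?_, ?_, ?_⟩
  · have hij' : i.succ ≠ j.succ := (Fin.succ_injective _).ne hij
    rcases hH.1.1 i.succ j.succ with h | h <;> simp [S, one_apply_ne hij', h]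
  · ext i j
    have h := hsum i 0
    rw [hSS, hS00] at h
    simpa [mul_apply, allOnes, hS_col, Fin.succ_ne_zero] using h
  · ext i j
    have h0j : S 0 j.succ = -1 := by rw [hS, hS_col]
    have h := hsum i j.succ
    rw [hSS, hS_col, h0j] at h
    rcases eq_or_ne i j with rfl | hij
    · simp [mul_apply, allOnes] at h ⊢; linarith
    · simp [mul_apply, allOnes, hij] at h ⊢; linarith

theorem IsSkewHadamard.exists_isSkewCore {d : ℕ}
    {H : Matrix (Fin (d + 1)) (Fin (d + 1)) ℝ} (hH : IsSkewHadamard H) :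
    ∃ C : Matrix (Fin d) (Fin d) ℝ, IsSkewCore C := by
  have h00 : H 0 0 = 1 := by
    have : H 0 0 = 2 - H 0 0 := by simpa [ofNat_apply] using congr_fun₂ hH.transpose_eq 0 0
    linarith
  -- conjugating by `diagonal (H · 0)` turns the first column into ones
  refine ⟨_, (hH.diagonal_mul_mul_diagonal fun i => hH.1.1 i 0).isSkewCore_submatrix_succ
    fun i => ?_⟩
  rcases hH.1.1 i 0 with h | h <;> simp [diagonal_mul, mul_diagonal, h00, h]

namespace IsSkewCore
variable {n : Type*} [DecidableEq n] [Fintype n] {C : Matrix n n ℝ} (hC : IsSkewCore C)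
include hC

theorem apply_self (i : n) : C i i = 0 := by
  have := congr_fun₂ hC.transpose_eq_neg i i
  simp only [transpose_apply, Matrix.neg_apply] at this
  linarith

theorem one_add_apply_sq (i j : n) : ((1 : Matrix n n ℝ) i j + C i j) ^ 2 = 1 := by
  by_cases h : i = j
  · subst h; simp [hC.apply_self]
  · simp [one_apply_ne h, ← sq_abs (C i j), hC.abs_apply_of_ne h]

theorem conjTranspose_map : (C.map Complex.ofRealHom)ᴴ = -C.map Complex.ofRealHom := by
  ext i j
  simpa using congr_arg Complex.ofReal (congr_fun₂ hC.transpose_eq_neg i j)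

theorem map_mul_allOnes : C.map Complex.ofRealHom * allOnes = 0 := by
  rw [← map_allOnes Complex.ofRealHom (map_one _), ← Matrix.map_mul, hC.mul_allOnes]
  ext; simp

theorem allOnes_mul_map : allOnes * C.map Complex.ofRealHom = 0 := by
  have h : allOnes * C = 0 := by
    rw [← transpose_transpose (allOnes * C), transpose_mul, hC.transpose_eq_neg, transpose_allOnes,
      Matrix.neg_mul, hC.mul_allOnes, neg_zero, transpose_zero]
  rw [← map_allOnes Complex.ofRealHom (map_one _), ← Matrix.map_mul, h]
  ext; simp

theorem map_mul_self : C.map Complex.ofRealHom * C.map Complex.ofRealHom =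
    allOnes - (Fintype.card n : ℂ) • 1 := by
  rw [← Matrix.map_mul, hC.mul_self]
  ext i j; by_cases h : i = j <;> simp [allOnes, h]

theorem coreComb_mul (a b c a' b' c' : ℂ) :
    coreComb C a b c * coreComb C a' b' c' =
      coreComb C (a * a' - Fintype.card n * b * b') (a * b' + b * a')
        (a * c' + c * a' + Fintype.card n * c * c' + b * b') := by
  simp only [coreComb, add_mul, mul_add, smul_mul_smul_comm, one_mul, mul_one, hC.map_mul_self,
    hC.map_mul_allOnes, hC.allOnes_mul_map, allOnes_mul_allOnes]
  module

theorem commute_coreComb (a b c a' b' c' : ℂ) :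
    Commute (coreComb C a b c) (coreComb C a' b' c') := by
  rw [Commute, SemiconjBy, hC.coreComb_mul, hC.coreComb_mul]
  congr 1 <;> ring

theorem conjTranspose_coreComb (a b c : ℂ) :
    (coreComb C a b c)ᴴ = coreComb C (star a) (-star b) (star c) := by
  simp only [coreComb, conjTranspose_add, conjTranspose_smul, conjTranspose_one,
    hC.conjTranspose_map, conjTranspose_allOnes]
  module

theorem coreComb_one_apply_self (θ : ℂ) (i : n) : coreComb C 1 θ 0 i i = 1 := by
  simp [coreComb_apply, hC.apply_self]

theorem norm_coreComb_one_apply_of_ne (θ : ℂ) {i j : n} (h : i ≠ j) :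
    ‖coreComb C 1 θ 0 i j‖ = ‖θ‖ := by
  simp [coreComb_apply, h, hC.abs_apply_of_ne h]

theorem norm_coreComb_apply {μ α γ : ℝ} (hμ : 0 ≤ μ) (hαγ : α ^ 2 + γ ^ 2 = μ ^ 2) (i j : n) :
    ‖coreComb C α α (Complex.I * γ) i j‖ = μ := by
  have h : coreComb C α α (Complex.I * γ) i j =
      ↑(α * ((1 : Matrix n n ℝ) i j + C i j)) + γ * Complex.I := by
    by_cases hij : i = j <;> simp [coreComb_apply, one_apply, hij] <;> ring
  rw [h, Complex.norm_add_mul_I, mul_pow, hC.one_add_apply_sq, mul_one, hαγ, Real.sqrt_sq hμ]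

theorem conjTranspose_mul_coreComb {μ α γ : ℝ}
    (h₁ : α ^ 2 * (Fintype.card n + 1) + Fintype.card n * μ ^ 2 = 1)
    (h₂ : Fintype.card n * γ ^ 2 = α ^ 2 + μ ^ 2) :
    (coreComb C α α (Complex.I * γ))ᴴ * coreComb C α α (Complex.I * γ) =
      coreComb C 1 (-(Complex.I * μ)) 0 * coreComb C 1 (Complex.I * μ) 0 := by
  have h₁' : (α : ℂ) ^ 2 * (Fintype.card n + 1) + Fintype.card n * (μ : ℂ) ^ 2 = 1 := by
    exact_mod_cast h₁
  have h₂' : Fintype.card n * (γ : ℂ) ^ 2 = (α : ℂ) ^ 2 + (μ : ℂ) ^ 2 := by exact_mod_cast h₂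
  rw [hC.conjTranspose_coreComb, hC.coreComb_mul, hC.coreComb_mul]
  simp only [Complex.star_def, map_mul, Complex.conj_ofReal, Complex.conj_I]
  congr 1
  · linear_combination h₁' - Fintype.card n * (μ : ℂ) ^ 2 * Complex.I_sq
  · ring
  · linear_combination h₂' + ((μ : ℂ) ^ 2 - Fintype.card n * (γ : ℂ) ^ 2) * Complex.I_sq

theorem posDef_coreComb_one [Nonempty n] {μ : ℝ} (hμ : μ ^ 2 * (2 * Fintype.card n - 1) = 1) :
    (coreComb C 1 (Complex.I * μ) 0).PosDef := by
  have hμ' : (μ : ℂ) ^ 2 * (2 * Fintype.card n - 1) = 1 := by exact_mod_cast hμ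
  have hμ0 : 0 < μ ^ 2 := (sq_nonneg μ).lt_of_ne fun h => by
    rw [← h, zero_mul] at hμ; exact zero_ne_one hμ
  refine PosDef.of_add_eq_smul_one (R' := coreComb C 1 (-(Complex.I * μ)) 0) ?_ two_pos ?_ ?_
  · rw [IsHermitian, hC.conjTranspose_coreComb]
    simp [Complex.conj_ofReal]
  · simp only [coreComb]; push_cast; module
  · have h : coreComb C 1 (-(Complex.I * μ)) 0 * coreComb C 1 (Complex.I * μ) 0 =
        (μ ^ 2 : ℝ) • (((Fintype.card n : ℂ) - 1) • 1 + allOnes) := by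
      rw [hC.coreComb_mul]
      simp only [coreComb]
      match_scalars
      · linear_combination -hμ' + Fintype.card n * (μ : ℂ) ^ 2 * Complex.I_sq
      · ring
      · linear_combination -(μ : ℂ) ^ 2 * Complex.I_sq
    rw [h]
    exact posDef_card_sub_one_smul_one_add_allOnes.smul hμ0

theorem exists_gram_eq_fromBlocks [Nonempty n] {μ α γ : ℝ}
    (hμ : μ ^ 2 * (2 * Fintype.card n - 1) = 1)
    (h₁ : α ^ 2 * (Fintype.card n + 1) + Fintype.card n * μ ^ 2 = 1)
    (h₂ : Fintype.card n * γ ^ 2 = α ^ 2 + μ ^ 2) :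
    ∃ F : Matrix n (n ⊕ n) ℂ,
      Fᴴ * F = fromBlocks (coreComb C 1 (Complex.I * μ) 0) (coreComb C α α (Complex.I * γ))
        (coreComb C α α (Complex.I * γ))ᴴ (coreComb C 1 (-(Complex.I * μ)) 0) ∧
      F * Fᴴ = (2 : ℂ) • 1 := by
  set R := coreComb C 1 (Complex.I * μ) 0
  set R' := coreComb C 1 (-(Complex.I * μ)) 0
  set Y := coreComb C α α (Complex.I * γ)
  obtain ⟨P, hP, hPR⟩ := (hC.posDef_coreComb_one hμ).exists_isUnit_conjTranspose_mul
  have hYY : Yᴴ * Y = R' * R := hC.conjTranspose_mul_coreComb h₁ h₂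
  have hYY' : Y * Yᴴ = R * R' := by
    rw [(hC.commute_coreComb _ _ _ _ _ _).eq, ← hYY, hC.conjTranspose_coreComb]
    exact (hC.commute_coreComb _ _ _ _ _ _).eq
  have hRR' : R + R' = (2 : ℂ) • 1 := by simp only [R, R', coreComb]; module
  exact ⟨fromCols P ((Pᴴ)⁻¹ * Y),
    conjTranspose_mul_self_fromCols_inv_mul hP hPR (hC.commute_coreComb _ _ _ _ _ _) hYY,
    mul_conjTranspose_self_fromCols_inv_mul hP hPR hRR' hYY'⟩

end IsSkewCore

theorem IsETF.submatrix_equiv {ι κ κ' : Type} [Fintype ι] [Fintype κ] [Fintype κ']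
    [DecidableEq ι] [DecidableEq κ] [DecidableEq κ'] {F : Matrix ι κ ℂ} (hF : IsETF F)
    (e : κ' ≃ κ) : IsETF (F.submatrix id e) := by
  obtain ⟨hdiag, hoff, htight⟩ := hF
  have hgram : (F.submatrix id e)ᴴ * F.submatrix id e = (Fᴴ * F).submatrix e e := by
    rw [conjTranspose_submatrix, ← submatrix_mul _ _ _ _ _ Function.bijective_id]
  refine ⟨fun j => ?_, fun j k hjk => ?_, ?_⟩
  · rw [hgram, submatrix_apply, hdiag]
  · rw [hgram, submatrix_apply, hoff _ _ (e.injective.ne hjk), Fintype.card_congr e]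
  · rw [conjTranspose_submatrix, submatrix_mul_equiv, submatrix_id_id, htight,
      Fintype.card_congr e]

theorem etfMu_add_self_sq_mul {d : ℕ} (hd : 0 < d) :
    etfMu d (d + d) ^ 2 * (2 * d - 1) = 1 := by
  have h2d : (0 : ℝ) < 2 * d - 1 := by
    have : (1 : ℝ) ≤ d := by exact_mod_cast hd
    linarith
  have harg : (((d + d : ℕ) : ℝ) - d) / (d * (((d + d : ℕ) : ℝ) - 1)) = 1 / (2 * d - 1) := by
    push_cast; field_simp; ring
  rw [etfMu, harg, Real.sq_sqrt (by positivity), one_div, inv_mul_cancel₀ h2d.ne']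

-- `α` and `γ` are the coefficients of the cross block `Y = α (I + C) + iγ J`.
theorem exists_cross_coeffs {d μ : ℝ} (hd : 1 ≤ d) (hμ : μ ^ 2 * (2 * d - 1) = 1) :
    ∃ α γ : ℝ, α ^ 2 * (d + 1) + d * μ ^ 2 = 1 ∧ d * γ ^ 2 = α ^ 2 + μ ^ 2 ∧
      α ^ 2 + γ ^ 2 = μ ^ 2 := by
  refine ⟨μ * √((d - 1) / (d + 1)), μ * √(2 / (d + 1)), ?_⟩
  rw [mul_pow, mul_pow, Real.sq_sqrt (div_nonneg (by linarith) (by positivity)),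
    Real.sq_sqrt (by positivity)]
  refine ⟨?_, ?_, ?_⟩ <;> field_simp
  · linear_combination hμ
  · ring
  · ring

theorem IsSkewCore.exists_isETF {n : Type} [Fintype n] [DecidableEq n] [Nonempty n]
    {C : Matrix n n ℝ} (hC : IsSkewCore C) : ∃ F : Matrix n (n ⊕ n) ℂ, IsETF F := by
  set μ := etfMu (Fintype.card n) (Fintype.card (n ⊕ n)) with hμdef
  have hμ0 : 0 ≤ μ := Real.sqrt_nonneg _
  have hμ : μ ^ 2 * (2 * Fintype.card n - 1) = 1 := by
    rw [hμdef, Fintype.card_sum]; exact etfMu_add_self_sq_mul Fintype.card_pos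
  obtain ⟨α, γ, h₁, h₂, hαγ⟩ :=
    exists_cross_coeffs (by exact_mod_cast Fintype.card_pos) hμ
  obtain ⟨F, hgram, htight⟩ := hC.exists_gram_eq_fromBlocks hμ h₁ h₂
  have hnorm : ‖Complex.I * μ‖ = μ := by simp [abs_of_nonneg hμ0]
  refine ⟨F, fun j => ?_, fun j k hjk => ?_, ?_⟩
  · rw [hgram]
    rcases j with i | i <;> exact hC.coreComb_one_apply_self _ i
  · rw [hgram]
    rcases j with i | i <;> rcases k with j | j
    · rw [fromBlocks_apply₁₁, hC.norm_coreComb_one_apply_of_ne _ (hjk <| congrArg _ ·), hnorm]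
    · rw [fromBlocks_apply₁₂, hC.norm_coreComb_apply hμ0 hαγ]
    · rw [fromBlocks_apply₂₁, conjTranspose_apply, norm_star, hC.norm_coreComb_apply hμ0 hαγ]
    · rw [fromBlocks_apply₂₂, hC.norm_coreComb_one_apply_of_ne _ (hjk <| congrArg _ ·), norm_neg,
        hnorm]
  · rw [htight, Fintype.card_sum]
    congr 1
    have : (Fintype.card n : ℂ) ≠ 0 := by exact_mod_cast Fintype.card_ne_zero
    push_cast
    field_simp
    ring

/-- **Main result.** If there exists a skew Hadamard matrix of order `d + 1`, then there
exists a complex equiangular tight frame of size `d × 2d`. -/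
theorem etf_of_skewHadamard_succ (d : ℕ) (hd : 0 < d)
    (h : ∃ H : Matrix (Fin (d + 1)) (Fin (d + 1)) ℝ, IsSkewHadamard H) :
    ∃ F : Matrix (Fin d) (Fin (2 * d)) ℂ, IsETF F := by
  obtain ⟨H, hH⟩ := h
  obtain ⟨C, hC⟩ := hH.exists_isSkewCore
  have : Nonempty (Fin d) := Fin.pos_iff_nonempty.mp hd
  obtain ⟨F, hF⟩ := hC.exists_isETF
  exact ⟨_, hF.submatrix_equiv ((finCongr (two_mul d)).trans finSumFinEquiv.symm)⟩
end

section
/- Let d be a positive integer. If there exists a skew Hadamard matrix of order 2d, then there exists a complex equiangular tight frame of size d × 2d. -/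
open Matrix

/-!
Write `H = I + C` with `C` real skew-symmetric. Then `Hᵀ H = (I - C)(I + C) = I - C²`, so the
Hadamard identity gives `C² = -(2d - 1) I`, and `S = iC` is Hermitian with zero diagonal,
unimodular off-diagonal entries and `S² = (2d - 1) I`. The Welch bound `μ` for `d × 2d` satisfies
`μ² (2d - 1) = 1`, hence `G = I + μ S` satisfies `G² = 2G` and `tr G = 2d`: `G / 2` is an
orthogonal projection of rank `d`. Taking for the rows of `F` the eigenvectors of `G` for the
eigenvalue `2`, scaled by `√2`, gives `Fᴴ F = G` and `F Fᴴ = 2 I`, and the entries of the Gram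
matrix `G` are exactly those of an equiangular tight frame.
-/

namespace Matrix.IsHermitian

variable {𝕜 : Type*} [RCLike 𝕜] {n : Type*} [Fintype n] [DecidableEq n]
  {G : Matrix n n 𝕜} (hG : G.IsHermitian) {c : ℝ}
include hG

theorem eigenvalues_eq_zero_or_eq_of_mul_self_eq_smul (h : G * G = (c : 𝕜) • G) (i : n) :
    hG.eigenvalues i = 0 ∨ hG.eigenvalues i = c := by
  set v : n → 𝕜 := ⇑(hG.eigenvectorBasis i)
  have hv : v ≠ 0 := (WithLp.ofLp_eq_zero 2).ne.2 <| hG.eigenvectorBasis.orthonormal.ne_zero i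
  have hGv : G *ᵥ v = hG.eigenvalues i • v := hG.mulVec_eigenvectorBasis i
  have key : (hG.eigenvalues i * hG.eigenvalues i) • v = (c * hG.eigenvalues i) • v := by
    have := congrArg (· *ᵥ v) h
    simp only [← mulVec_mulVec, hGv, mulVec_smul, smul_mulVec, smul_smul] at this
    rwa [← RCLike.real_smul_eq_coe_smul (K := 𝕜), smul_smul] at this
  have := smul_left_injective ℝ hv key
  rcases mul_eq_zero.mp (show hG.eigenvalues i * (hG.eigenvalues i - c) = 0 by
    linear_combination this) with h0 | hc
  · exact .inl h0
  · exact .inr (sub_eq_zero.mp hc)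

theorem card_eigenvalues_eq_of_mul_self_eq_smul (hc : c ≠ 0) (h : G * G = (c : 𝕜) • G) {d : ℕ}
    (htr : G.trace = c * d) : Fintype.card {i // hG.eigenvalues i = c} = d := by
  have hsum : ∑ i, hG.eigenvalues i = c * Fintype.card {i // hG.eigenvalues i = c} := by
    rw [Fintype.card_subtype, Finset.card_eq_sum_ones, Nat.cast_sum, Finset.mul_sum,
      Finset.sum_filter]
    refine Finset.sum_congr rfl fun i _ => ?_
    rcases hG.eigenvalues_eq_zero_or_eq_of_mul_self_eq_smul h i with h0 | hc' <;> simp [*]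
  rw [hG.trace_eq_sum_eigenvalues, ← RCLike.ofReal_sum, hsum] at htr
  have hcast : (c * Fintype.card {i // hG.eigenvalues i = c} : ℝ) = c * d := by exact_mod_cast htr
  exact_mod_cast mul_left_cancel₀ hc hcast

theorem exists_conjTranspose_mul_self_eq_of_mul_self_eq_smul {m : Type*} [Fintype m]
    [DecidableEq m] (hc : 0 < c) (h : G * G = (c : 𝕜) • G)
    (htr : G.trace = c * Fintype.card m) :
    ∃ F : Matrix m n 𝕜, Fᴴ * F = G ∧ F * Fᴴ = (c : 𝕜) • 1 := by
  obtain ⟨e⟩ : Nonempty (m ≃ {i // hG.eigenvalues i = c}) :=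
    Fintype.card_eq.mp (hG.card_eigenvalues_eq_of_mul_self_eq_smul hc.ne' h htr).symm
  set U : Matrix n n 𝕜 := (hG.eigenvectorUnitary : Matrix n n 𝕜)
  set f : m → n := fun k => (e k).1
  have hU : (star U)ᴴ = U := by rw [star_eq_conjTranspose, conjTranspose_conjTranspose]
  set s : 𝕜 := ((√c : ℝ) : 𝕜)
  have hs : s * star s = c := by
    rw [RCLike.star_def, RCLike.conj_ofReal, ← RCLike.ofReal_mul, Real.mul_self_sqrt hc.le]
  have hsel (g : n → 𝕜) : ∑ k, (c : 𝕜) * g (f k) = ∑ i, (hG.eigenvalues i : 𝕜) * g i := by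
    rw [Equiv.sum_comp e (fun t => (c : 𝕜) * g t),
      ← Finset.sum_subtype (Finset.univ.filter fun i => hG.eigenvalues i = c)
        (p := fun i => hG.eigenvalues i = c) (by simp) (fun i => (c : 𝕜) * g i),
      Finset.sum_filter]
    refine Finset.sum_congr rfl fun i _ => ?_
    rcases hG.eigenvalues_eq_zero_or_eq_of_mul_self_eq_smul h i with h0 | hc' <;> simp [*, hc.ne]
  refine ⟨s • (star U).submatrix f id, ?_, ?_⟩
  · calc (s • (star U).submatrix f id)ᴴ * (s • (star U).submatrix f id)
        = (c : 𝕜) • (U.submatrix id f * (star U).submatrix f id) := by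
          rw [conjTranspose_smul, conjTranspose_submatrix, hU, smul_mul, Matrix.mul_smul, smul_smul,
            mul_comm, hs]
      _ = U * diagonal (RCLike.ofReal ∘ hG.eigenvalues) * star U := by
          ext j l
          simp only [smul_apply, mul_apply, submatrix_apply, id, smul_eq_mul, Finset.mul_sum,
            diagonal_apply, mul_ite, mul_zero, Finset.sum_ite_eq', Finset.mem_univ, if_true,
            Function.comp_apply]
          rw [hsel fun i => U j i * star U i l]
          exact Finset.sum_congr rfl fun i _ => by ring
      _ = G := by simpa using hG.spectral_theorem.symm
  · rw [conjTranspose_smul, conjTranspose_submatrix, hU, smul_mul, Matrix.mul_smul, smul_smul, hs,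
      ← submatrix_mul _ _ _ _ _ Function.bijective_id, Unitary.coe_star_mul_self,
      submatrix_one f (Subtype.val_injective.comp e.injective)]

end Matrix.IsHermitian

theorem etfMu_sq_mul_two_mul_sub_one {d : ℕ} (hd : 0 < d) :
    etfMu d (2 * d) ^ 2 * (2 * d - 1) = 1 := by
  have hd' : (1 : ℝ) ≤ d := by exact_mod_cast hd
  have hpos : (2 * d - 1 : ℝ) ≠ 0 := by linarith
  have harg : ((2 * d : ℕ) - d : ℝ) / (d * ((2 * d : ℕ) - 1)) = (2 * d - 1 : ℝ)⁻¹ := by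
    push_cast
    field_simp
    ring
  rw [etfMu, harg, Real.sq_sqrt (inv_nonneg.mpr (by linarith)), inv_mul_cancel₀ hpos]

/-- The signature matrix `i (H - I)`, as in `IsSignatureOf`, of the frame built from `H`. -/
noncomputable def skewSignature {ι : Type} [DecidableEq ι] (H : Matrix ι ι ℝ) : Matrix ι ι ℂ :=
  Complex.I • (H - 1).map (↑)

namespace IsSkewHadamard

variable {ι : Type} [Fintype ι] [DecidableEq ι] {H : Matrix ι ι ℝ}

theorem apply_self (hH : IsSkewHadamard H) (i : ι) : H i i = 1 := by
  have := congrFun (congrFun hH.2 i) i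
  simp only [transpose_apply, Matrix.neg_apply, Matrix.sub_apply, one_apply_eq] at this
  linarith

theorem sub_one_mul_self_s3 (hH : IsSkewHadamard H) :
    (H - 1) * (H - 1) = (1 - Fintype.card ι : ℝ) • 1 := by
  have hHt : Hᵀ = 1 - (H - 1) := by
    have hC := hH.2
    rw [transpose_sub, transpose_one] at hC
    rw [← sub_add_cancel Hᵀ 1, hC]
    abel
  calc (H - 1) * (H - 1) = 1 - (1 - (H - 1)) * H := by noncomm_ring
    _ = (1 - Fintype.card ι : ℝ) • 1 := by rw [← hHt, hH.1.2, sub_smul, one_smul]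

theorem isHermitian_skewSignature (hH : IsSkewHadamard H) : (skewSignature H).IsHermitian := by
  refine IsHermitian.ext fun i j => ?_
  have hji : (H - 1) j i = -(H - 1) i j := congrFun (congrFun hH.2 i) j
  simp only [skewSignature, Matrix.smul_apply, map_apply, hji, smul_eq_mul, star_mul',
    Complex.star_def, Complex.conj_I, Complex.ofReal_neg, map_neg, Complex.conj_ofReal]
  ring

theorem skewSignature_mul_self (hH : IsSkewHadamard H) :
    skewSignature H * skewSignature H = ((Fintype.card ι : ℂ) - 1) • 1 := by
  have hmap : (H - 1).map ((↑) : ℝ → ℂ) * (H - 1).map (↑) =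
      ((1 - Fintype.card ι : ℝ) • 1 : Matrix ι ι ℝ).map (↑) := by
    rw [← hH.sub_one_mul_self_s3]
    exact (Matrix.map_mul (f := Complex.ofRealHom)).symm
  rw [skewSignature, smul_mul, Matrix.mul_smul, smul_smul, Complex.I_mul_I, hmap]
  ext i j
  by_cases hij : i = j <;> simp [hij]

theorem skewSignature_apply_self (hH : IsSkewHadamard H) (i : ι) : skewSignature H i i = 0 := by
  simp [skewSignature, hH.apply_self i]

theorem norm_skewSignature_apply (hH : IsSkewHadamard H) {i j : ι} (hij : i ≠ j) :
    ‖skewSignature H i j‖ = 1 := by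
  rcases hH.1.1 i j with h | h <;> simp [skewSignature, hij, h]

end IsSkewHadamard

theorem exists_isETF_of_signature {n : Type} [Fintype n] [DecidableEq n] {d : ℕ} (hd : 0 < d)
    (hn : Fintype.card n = 2 * d) {S : Matrix n n ℂ} (hS : S.IsHermitian)
    (hS2 : S * S = ((Fintype.card n : ℂ) - 1) • 1) (hdiag : ∀ i, S i i = 0)
    (hoff : ∀ i j, i ≠ j → ‖S i j‖ = 1) :
    ∃ F : Matrix (Fin d) n ℂ, IsETF F := by
  set μ := etfMu d (2 * d)
  have hμ : (μ : ℂ) * μ * ((Fintype.card n : ℂ) - 1) = 1 := by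
    have := etfMu_sq_mul_two_mul_sub_one hd
    rw [hn]
    push_cast
    exact_mod_cast (by linear_combination this : μ * μ * (2 * d - 1) = 1)
  set G := 1 + (μ : ℂ) • S
  have hG : G.IsHermitian :=
    isHermitian_one.add (hS.smul (isSelfAdjoint_iff.mpr (Complex.conj_ofReal μ)))
  have hG2 : G * G = ((2 : ℝ) : ℂ) • G := by
    simp only [G, add_mul, mul_add, one_mul, mul_one, smul_mul, Matrix.mul_smul, smul_smul, hS2]
    match_scalars
    · linear_combination hμ
    · ring
  have htr : G.trace = ((2 : ℝ) : ℂ) * Fintype.card (Fin d) := by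
    simp [G, trace, hdiag, hn]
  obtain ⟨F, hFG, hFF⟩ := hG.exists_conjTranspose_mul_self_eq_of_mul_self_eq_smul two_pos hG2 htr
  refine ⟨F, fun j => ?_, fun j k hjk => ?_, ?_⟩
  · simp [hFG, G, hdiag]
  · simp [hFG, G, hjk, hoff j k hjk, μ, hn, etfMu, Real.sqrt_nonneg]
  · rw [hFF, Fintype.card_fin, hn]
    push_cast
    rw [mul_div_cancel_right₀ _ (Nat.cast_ne_zero.mpr hd.ne')]

/-- If there exists a skew Hadamard matrix of order `2d`, then there exists a complex
equiangular tight frame of size `d × 2d`. -/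
theorem etf_of_skewHadamard_double (d : ℕ) (hd : 0 < d)
    (h : ∃ H : Matrix (Fin (2 * d)) (Fin (2 * d)) ℝ, IsSkewHadamard H) :
    ∃ F : Matrix (Fin d) (Fin (2 * d)) ℂ, IsETF F := by
  obtain ⟨H, hH⟩ := h
  exact exists_isETF_of_signature hd (Fintype.card_fin _) hH.isHermitian_skewSignature
    hH.skewSignature_mul_self hH.skewSignature_apply_self fun _ _ => hH.norm_skewSignature_apply
end

section
/- (Signature matrix, necessity) Let F be an equiangular tight frame of size d × n with n > d ≥ 1, and let S = (1/μ)(F*F − I) be its signature matrix, where μ = √((n−d)/(d(n−1))). Then S = S*, every diagonal entry of S is zero, every off-diagonal entry of S has modulus 1, and S² = c·S + (n−1)·I, where c = (n−2d)·√((n−1)/(d(n−d))). -/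
open Matrix

/-! The tightness `F Fᴴ = (n/d) I` makes the Gram matrix `G = Fᴴ F` satisfy `G² = (n/d) G`.
Substituting `G = 1 + μ S` turns this into a quadratic relation for `S`, whose coefficients
`μ⁻¹ (n/d - 2)` and `μ⁻² (n/d - 1)` are simplified using `μ² = (n - d) / (d (n - 1))`. -/

theorem Matrix.gram_mul_gram_of_mul_conjTranspose_eq_smul {ι κ R : Type*} [Fintype ι]
    [Fintype κ] [DecidableEq ι] [CommSemiring R] [StarRing R] {F : Matrix ι κ R} {a : R}
    (h : F * Fᴴ = a • 1) : Fᴴ * F * (Fᴴ * F) = a • (Fᴴ * F) := by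
  rw [Matrix.mul_assoc, ← Matrix.mul_assoc F, h, Matrix.smul_mul, Matrix.one_mul,
    Matrix.mul_smul]

theorem sq_smul_sub_one_of_mul_self_eq_smul {R A : Type*} [CommRing R] [Ring A] [Algebra R A]
    {G : A} {a : R} (h : G * G = a • G) (t : R) :
    (t • (G - 1)) ^ 2 = (t * (a - 2)) • (t • (G - 1)) + (t ^ 2 * (a - 1)) • 1 := by
  rw [sq, smul_mul_smul_comm, sub_mul, mul_sub, mul_sub, h, mul_one, one_mul, one_mul]
  module

theorem etfMu_pos {d n : ℕ} (hd : 0 < d) (hdn : d < n) : 0 < etfMu d n := by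
  have hd' : (1 : ℝ) ≤ d := Nat.one_le_cast.2 hd
  have hdn' : (d : ℝ) < n := by exact_mod_cast hdn
  exact Real.sqrt_pos.2 (div_pos (by linarith) (mul_pos (by linarith) (by linarith)))

theorem inv_etfMu {d n : ℕ} (hd : 0 < d) (hdn : d < n) :
    (etfMu d n)⁻¹ = d * Real.sqrt (((n : ℝ) - 1) / (d * ((n : ℝ) - d))) := by
  have hd' : (0 : ℝ) < d := by exact_mod_cast hd
  have hdn' : (d : ℝ) < n := by exact_mod_cast hdn
  have hd1 : (1 : ℝ) ≤ d := Nat.one_le_cast.2 hd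
  have hx : 0 ≤ ((n : ℝ) - 1) / (d * ((n : ℝ) - d)) :=
    div_nonneg (by linarith) (mul_nonneg hd'.le (by linarith))
  have hμ := Real.sqrt_pos.1 (etfMu_pos hd hdn)
  rw [etfMu, ← Real.sqrt_inv, Real.sqrt_eq_iff_mul_self_eq (inv_pos.2 hμ).le (by positivity),
    mul_mul_mul_comm, Real.mul_self_sqrt hx]
  field_simp

theorem inv_etfMu_sq {d n : ℕ} (hd : 0 < d) (hdn : d < n) :
    (etfMu d n)⁻¹ ^ 2 = d * ((n : ℝ) - 1) / ((n : ℝ) - d) := by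
  have hd' : (0 : ℝ) < d := by exact_mod_cast hd
  have hdn' : (d : ℝ) < n := by exact_mod_cast hdn
  rw [etfMu, ← Real.sqrt_inv, Real.sq_sqrt (inv_pos.2 (Real.sqrt_pos.1 (etfMu_pos hd hdn))).le]
  field_simp

namespace IsSignatureOf

variable {ι κ : Type} [Fintype ι] [Fintype κ] [DecidableEq ι] [DecidableEq κ]
  {S : Matrix κ κ ℂ} {F : Matrix ι κ ℂ}

theorem isHermitian (hS : IsSignatureOf S F) : S.IsHermitian := by
  rw [hS.2]
  exact ((isHermitian_conjTranspose_mul_self F).sub isHermitian_one).smul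
    (by rw [IsSelfAdjoint, star_inv₀, Complex.star_def, Complex.conj_ofReal])

theorem apply_self (hS : IsSignatureOf S F) (i : κ) : S i i = 0 := by
  simp [hS.2, hS.1.1 i]

theorem norm_apply_of_ne (hS : IsSignatureOf S F) (hι : 0 < Fintype.card ι)
    (hικ : Fintype.card ι < Fintype.card κ) {i j : κ} (hij : i ≠ j) : ‖S i j‖ = 1 := by
  rw [hS.2, Matrix.smul_apply, Matrix.sub_apply, one_apply_ne hij, sub_zero, smul_eq_mul, norm_mul,
    norm_inv, Complex.norm_real, Real.norm_of_nonneg (etfMu_pos hι hικ).le, hS.1.2.1 i j hij]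
  exact inv_mul_cancel₀ (etfMu_pos hι hικ).ne'

theorem sq_eq (hS : IsSignatureOf S F) :
    S ^ 2 = (((etfMu (Fintype.card ι) (Fintype.card κ) : ℝ) : ℂ)⁻¹
          * ((Fintype.card κ : ℂ) / Fintype.card ι - 2)) • S
      + (((etfMu (Fintype.card ι) (Fintype.card κ) : ℝ) : ℂ)⁻¹ ^ 2
          * ((Fintype.card κ : ℂ) / Fintype.card ι - 1)) • 1 := by
  rw [hS.2]
  exact sq_smul_sub_one_of_mul_self_eq_smul
    (gram_mul_gram_of_mul_conjTranspose_eq_smul hS.1.2.2) _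

end IsSignatureOf

/-- **Signature matrix, necessity.** If `F` is an ETF of size `d × n` with `n > d ≥ 1` and
`S = (1/μ)(Fᴴ F − I)` is its signature matrix, then `S = Sᴴ`, `S` has zero diagonal and
unimodular off-diagonal entries, and `S² = c·S + (n−1)·I` where
`c = (n−2d)·√((n−1)/(d(n−d)))`. -/
theorem signature_necessity (d n : ℕ) (hd : 1 ≤ d) (hdn : d < n)
    (F : Matrix (Fin d) (Fin n) ℂ) (S : Matrix (Fin n) (Fin n) ℂ)
    (hS : IsSignatureOf S F) :
    Sᴴ = S ∧ (∀ i, S i i = 0) ∧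
      (∀ i j, i ≠ j → ‖S i j‖ = 1) ∧
      S ^ 2 = ((((n : ℝ) - 2 * d) * Real.sqrt (((n : ℝ) - 1) / (d * ((n : ℝ) - d))) : ℝ) : ℂ) • S
        + ((n : ℂ) - 1) • 1 := by
  have hcard : 0 < Fintype.card (Fin d) ∧ Fintype.card (Fin d) < Fintype.card (Fin n) := by
    simpa using ⟨hd, hdn⟩
  refine ⟨hS.isHermitian, hS.apply_self, fun i j ↦ hS.norm_apply_of_ne hcard.1 hcard.2, ?_⟩
  have hd' : (d : ℝ) ≠ 0 := by positivity
  have hdn' : (n : ℝ) - d ≠ 0 := sub_ne_zero.2 (by exact_mod_cast hdn.ne')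
  have hc : (etfMu d n)⁻¹ * ((n : ℝ) / d - 2)
      = ((n : ℝ) - 2 * d) * Real.sqrt (((n : ℝ) - 1) / (d * ((n : ℝ) - d))) := by
    rw [inv_etfMu hd hdn]
    field_simp
  have hn : (etfMu d n)⁻¹ ^ 2 * ((n : ℝ) / d - 1) = n - 1 := by
    rw [inv_etfMu_sq hd hdn]
    field_simp
  rw [hS.sq_eq]
  simp only [Fintype.card_fin]
  congr 2
  · rw [← hc]
    push_cast
    ring
  · simpa using congrArg ((↑) : ℝ → ℂ) hn
end

section
/- (Signature matrix, sufficiency) Let n ≥ 2 and let S ∈ ℂ^{n×n} satisfy S = S*, have all diagonal entries zero and all off-diagonal entries of modulus 1, and suppose S² = c·S + (n−1)·I for some real number c. Then there is a unique positive integer d < n with c = (n−2d)·√((n−1)/(d(n−d))), and S is the signature matrix of some equiangular tight frame of size d × n. -/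
/-! Since `S` is Hermitian with `S² = c S + (n - 1) I`, its spectrum lies among the roots
`b < a` of `x² - c x - (n - 1)`, so `P = (S - b I)/(a - b)` is an orthogonal projection;
as a projection of some rank `d` it factors as `P = Vᴴ V` with `V ∈ ℂ^{d×n}`, `V Vᴴ = I`.
Because `tr S = 0`, taking traces gives `d (a - b) = -n b`, that is
`n c = (n - 2d) √(c² + 4(n - 1))`; this equation determines `d`, and squaring it turns it
into the closed formula for `c`. Finally `F = √(n/d) V` has `F Fᴴ = (n/d) I` and
`Fᴴ F = (n/d) P = μ S + I`. -/

open Matrix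

theorem isIdempotentElem_smul_sub_of_sq_eq {K A : Type*} [Field K] [Ring A] [Algebra K A]
    {x : A} {a b : K} (hab : a ≠ b) (hx : x ^ 2 = (a + b) • x - (a * b) • 1) :
    IsIdempotentElem ((a - b)⁻¹ • (x - b • 1)) := by
  have hsq : (x - b • 1) * (x - b • 1) = (a - b) • (x - b • 1) := by
    have : (x - b • 1) * (x - b • 1) = x ^ 2 - (2 * b) • x + (b * b) • 1 := by
      simp only [sub_mul, mul_sub, smul_mul_assoc, mul_smul_comm, one_mul, mul_one, pow_two]
      module
    rw [this, hx]
    module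
  rw [IsIdempotentElem, smul_mul_smul_comm, hsq, smul_smul, mul_assoc,
    inv_mul_cancel₀ (sub_ne_zero.mpr hab), mul_one]

theorem Matrix.IsHermitian.exists_mul_conjTranspose_eq_one_of_isIdempotentElem
    {𝕜 ι : Type*} [RCLike 𝕜] [Fintype ι] [DecidableEq ι] {P : Matrix ι ι 𝕜}
    (hP : P.IsHermitian) (hPP : IsIdempotentElem P) :
    ∃ (d : ℕ) (V : Matrix (Fin d) ι 𝕜), V * Vᴴ = 1 ∧ Vᴴ * V = P := by
  set U : Matrix ι ι 𝕜 := (hP.eigenvectorUnitary : Matrix ι ι 𝕜)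
  set e := hP.eigenvalues
  have he : ∀ i, e i = 0 ∨ e i = 1 := fun i =>
    hPP.spectrum_subset ℝ (hP.eigenvalues_mem_spectrum_real i)
  let κ := {i // e i = 1}
  -- `σ` enumerates the eigenvectors with eigenvalue `1`; the rows of `V` are their conjugates.
  let σ : Fin (Fintype.card κ) ↪ ι :=
    (Fintype.equivFin κ).symm.toEmbedding.trans (Function.Embedding.subtype _)
  have hsum : ∀ f : ι → 𝕜, ∑ r, f (σ r) = ∑ i, (e i : 𝕜) * f i := by
    intro f
    refine (Equiv.sum_comp (Fintype.equivFin κ).symm (fun x : κ => f x)).trans ?_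
    rw [← Finset.sum_subtype (Finset.univ.filter (e · = 1)) (by simp), Finset.sum_filter]
    refine Finset.sum_congr rfl fun i _ => ?_
    rcases he i with h | h <;> simp [h]
  refine ⟨Fintype.card κ, Uᴴ.submatrix σ id, ?_, ?_⟩
  · rw [conjTranspose_submatrix, conjTranspose_conjTranspose,
      ← submatrix_mul _ _ _ _ _ Function.bijective_id]
    simp [U, ← star_eq_conjTranspose, submatrix_one_embedding]
  · ext j k
    conv_rhs => rw [hP.spectral_theorem]
    simp only [mul_apply, conjTranspose_apply, submatrix_apply, id, star_star]
    rw [hsum (fun i => U j i * star (U k i)), Unitary.conjStarAlgAut_apply, mul_apply]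
    refine Finset.sum_congr rfl fun i _ => ?_
    simp [mul_diagonal, U, e]
    ring

theorem Matrix.trace_conjTranspose_mul_self_of_mul_conjTranspose_eq_one {R ι : Type*}
    [CommRing R] [StarRing R] [Fintype ι] {d : ℕ} {V : Matrix (Fin d) ι R}
    (hV : V * Vᴴ = 1) : (Vᴴ * V).trace = d := by
  rw [trace_mul_comm, hV, trace_one, Fintype.card_fin]

theorem Matrix.IsHermitian.exists_mul_conjTranspose_eq_one_of_sq_eq {ι : Type*} [Fintype ι]
    [DecidableEq ι] {S : Matrix ι ι ℂ} (hS : S.IsHermitian) (htr : S.trace = 0) {c q : ℝ}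
    (hdisc : 0 < c ^ 2 + 4 * q) (hS2 : S ^ 2 = (c : ℂ) • S + (q : ℂ) • 1) :
    ∃ (d : ℕ) (V : Matrix (Fin d) ι ℂ), V * Vᴴ = 1 ∧
      Vᴴ * V = (Real.sqrt (c ^ 2 + 4 * q) : ℂ)⁻¹ •
        (S - (((c - Real.sqrt (c ^ 2 + 4 * q)) / 2 : ℝ) : ℂ) • 1) ∧
      (Fintype.card ι : ℝ) * c = (Fintype.card ι - 2 * d) * Real.sqrt (c ^ 2 + 4 * q) := by
  set Δ := Real.sqrt (c ^ 2 + 4 * q)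
  have hΔsq : Δ ^ 2 = c ^ 2 + 4 * q := Real.sq_sqrt hdisc.le
  have hΔ : 0 < Δ := Real.sqrt_pos.mpr hdisc
  set a : ℝ := (c + Δ) / 2
  set b : ℝ := (c - Δ) / 2
  have hPidem : IsIdempotentElem ((Δ : ℂ)⁻¹ • (S - (b : ℂ) • 1)) := by
    have hab : (a : ℂ) - b = Δ := by push_cast [a, b]; ring
    have hΔsq' : (Δ : ℂ) ^ 2 = c ^ 2 + 4 * q := by exact_mod_cast hΔsq
    have hsum : (c : ℂ) = a + b := by push_cast [a, b]; ring
    have hprod : (q : ℂ) = -(a * b) := by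
      push_cast [a, b]
      linear_combination (-1 / 4 : ℂ) * hΔsq'
    rw [← hab]
    refine isIdempotentElem_smul_sub_of_sq_eq ?_ ?_
    · rw [Ne, ← sub_eq_zero, hab]
      exact_mod_cast hΔ.ne'
    · rw [hS2, hsum, hprod, neg_smul, sub_eq_add_neg]
  have hPherm : ((Δ : ℂ)⁻¹ • (S - (b : ℂ) • 1)).IsHermitian := by
    have hreal : ∀ r : ℝ, IsSelfAdjoint (r : ℂ) := fun r => Complex.conj_ofReal r
    exact (hS.sub (isHermitian_one.smul (hreal b))).smul (by simpa using hreal Δ⁻¹)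
  obtain ⟨d, V, hVV, hVP⟩ := hPherm.exists_mul_conjTranspose_eq_one_of_isIdempotentElem hPidem
  refine ⟨d, V, hVV, hVP, ?_⟩
  have h := trace_conjTranspose_mul_self_of_mul_conjTranspose_eq_one hVV
  rw [hVP, trace_smul, trace_sub, trace_smul, trace_one, htr, smul_eq_mul, smul_eq_mul] at h
  have h' : Δ⁻¹ * (0 - b * Fintype.card ι) = (d : ℝ) := by exact_mod_cast h
  field_simp at h'
  linear_combination -2 * h'

theorem pos_and_lt_of_mul_eq_mul_sqrt {n d c : ℝ} (hn : 1 < n)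
    (hc : n * c = (n - 2 * d) * Real.sqrt (c ^ 2 + 4 * (n - 1))) : 0 < d ∧ d < n := by
  have hcΔ : |c| < Real.sqrt (c ^ 2 + 4 * (n - 1)) :=
    Real.lt_sqrt_of_sq_lt (by rw [sq_abs]; linarith)
  have := abs_lt.mp hcΔ
  constructor <;> nlinarith [abs_nonneg c]

theorem sqrt_sq_add_eq_of_eq_welch {n d c : ℝ} (hn : 1 ≤ n) (hd : 0 < d) (hdn : d < n)
    (hc : c = (n - 2 * d) * Real.sqrt ((n - 1) / (d * (n - d)))) :
    Real.sqrt (c ^ 2 + 4 * (n - 1)) = n * Real.sqrt ((n - 1) / (d * (n - d))) := by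
  set s := Real.sqrt ((n - 1) / (d * (n - d)))
  have hdnd : 0 < d * (n - d) := mul_pos hd (sub_pos.mpr hdn)
  have hs : s ^ 2 * (d * (n - d)) = n - 1 := by
    rw [Real.sq_sqrt (div_nonneg (by linarith) hdnd.le), div_mul_cancel₀ _ hdnd.ne']
  rw [← Real.sqrt_sq (by positivity : 0 ≤ n * s), hc]
  congr 1
  linear_combination -4 * hs

theorem eq_welch_iff {n d c : ℝ} (hn : 1 ≤ n) (hd : 0 < d) (hdn : d < n) :
    c = (n - 2 * d) * Real.sqrt ((n - 1) / (d * (n - d))) ↔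
      n * c = (n - 2 * d) * Real.sqrt (c ^ 2 + 4 * (n - 1)) := by
  set s := Real.sqrt ((n - 1) / (d * (n - d)))
  set Δ := Real.sqrt (c ^ 2 + 4 * (n - 1))
  refine ⟨fun hc => ?_, fun hc => ?_⟩
  · rw [show Δ = n * s from sqrt_sq_add_eq_of_eq_welch hn hd hdn hc, hc]
    ring
  · have hΔ : Δ ^ 2 = c ^ 2 + 4 * (n - 1) := Real.sq_sqrt (by nlinarith)
    have hdnd : 0 < d * (n - d) := mul_pos hd (sub_pos.mpr hdn)
    have hs : s ^ 2 * (d * (n - d)) = n - 1 := by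
      rw [Real.sq_sqrt (div_nonneg (by linarith) hdnd.le), div_mul_cancel₀ _ hdnd.ne']
    -- squaring `n c = (n - 2d) Δ` and using `n² - (n - 2d)² = 4d(n - d)` gives `Δ = n s`
    have hΔs : Δ = n * s := by
      refine (pow_left_inj₀ (Real.sqrt_nonneg _) (by positivity) two_ne_zero).mp
        (mul_right_cancel₀ hdnd.ne' ?_)
      linear_combination (1 / 4 : ℝ) * ((n * c + (n - 2 * d) * Δ) * hc + n ^ 2 * hΔ)
        - n ^ 2 * hs
    refine mul_left_cancel₀ (by linarith : n ≠ 0) ?_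
    rw [hc, hΔs]
    ring

theorem etfMu_eq_inv {d n : ℕ} (hd : 0 < d) (hdn : d < n) :
    etfMu d n = ((d : ℝ) * Real.sqrt (((n : ℝ) - 1) / (d * ((n : ℝ) - d))))⁻¹ := by
  have hd' : (0 : ℝ) < d := by exact_mod_cast hd
  have hdn' : (0 : ℝ) < n - d := sub_pos.mpr (by exact_mod_cast hdn)
  have hn' : (0 : ℝ) < n - 1 := by
    have : (1 : ℝ) < n := by exact_mod_cast (by omega : 1 < n)
    linarith
  have hs := Real.sq_sqrt (show (0 : ℝ) ≤ (n - 1) / (d * (n - d)) by positivity)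
  rw [etfMu, Real.sqrt_eq_iff_eq_sq (by positivity) (by positivity), inv_pow, mul_pow, hs]
  field_simp

theorem etfMu_eq_div_of_mul_eq_mul_sqrt {d n : ℕ} {c : ℝ} (hd : 0 < d) (hdn : d < n)
    (hc : (n : ℝ) * c = (n - 2 * d) * Real.sqrt (c ^ 2 + 4 * ((n : ℝ) - 1))) :
    etfMu d n = n / d * (Real.sqrt (c ^ 2 + 4 * ((n : ℝ) - 1)))⁻¹ := by
  have hd' : (0 : ℝ) < d := by exact_mod_cast hd
  have hn : (1 : ℝ) ≤ n := by exact_mod_cast (by omega : 1 ≤ n)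
  have hdn' : (d : ℝ) < n := by exact_mod_cast hdn
  rw [etfMu_eq_inv hd hdn,
    sqrt_sq_add_eq_of_eq_welch hn hd' hdn' ((eq_welch_iff hn hd' hdn').mpr hc)]
  field_simp

theorem isSignatureOf_of_gram_eq {ι κ : Type} [Fintype ι] [Fintype κ] [DecidableEq ι]
    [DecidableEq κ] {S : Matrix κ κ ℂ} {F : Matrix ι κ ℂ}
    (hμ : etfMu (Fintype.card ι) (Fintype.card κ) ≠ 0) (hdiag : ∀ i, S i i = 0)
    (hoff : ∀ i j, i ≠ j → ‖S i j‖ = 1)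
    (hgram : Fᴴ * F = (etfMu (Fintype.card ι) (Fintype.card κ) : ℂ) • S + 1)
    (hframe : F * Fᴴ = ((Fintype.card κ : ℂ) / (Fintype.card ι : ℂ)) • 1) :
    IsSignatureOf S F := by
  refine ⟨⟨fun j => by simp [hgram, hdiag], fun j k hjk => ?_, hframe⟩, ?_⟩
  · simp [hgram, one_apply_ne hjk, hoff j k hjk, etfMu]
  · rw [hgram, add_sub_cancel_right, inv_smul_smul₀ (by exact_mod_cast hμ)]

theorem isSignatureOf_smul_of_mul_conjTranspose_eq_one {d n : ℕ} {S : Matrix (Fin n) (Fin n) ℂ}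
    {V : Matrix (Fin d) (Fin n) ℂ} {t b : ℝ} (hdiag : ∀ i, S i i = 0)
    (hoff : ∀ i j, i ≠ j → ‖S i j‖ = 1) (hVV : V * Vᴴ = 1)
    (hVP : Vᴴ * V = (t : ℂ)⁻¹ • (S - (b : ℂ) • 1)) (ht : etfMu d n = n / d * t⁻¹)
    (hb : etfMu d n * b = -1) :
    IsSignatureOf S ((Real.sqrt (n / d) : ℂ) • V) := by
  set r : ℝ := Real.sqrt (n / d)
  have hr : (r : ℂ) * r = (n / d : ℝ) := by
    rw [← Complex.ofReal_mul, Real.mul_self_sqrt (by positivity)]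
  refine isSignatureOf_of_gram_eq ?_ hdiag hoff ?_ ?_ <;> simp only [Fintype.card_fin]
  · rintro h
    simp [h] at hb
  · have ht' : ((n / d : ℝ) : ℂ) * (t : ℂ)⁻¹ = etfMu d n := by exact_mod_cast ht.symm
    have hb' : (etfMu d n : ℂ) * b = -1 := by exact_mod_cast hb
    rw [conjTranspose_smul, Complex.star_def, Complex.conj_ofReal, smul_mul, Matrix.mul_smul,
      smul_smul, hr, hVP, smul_smul, smul_sub, smul_smul, ht', hb', neg_smul, one_smul,
      sub_neg_eq_add]
  · rw [conjTranspose_smul, Complex.star_def, Complex.conj_ofReal, smul_mul, Matrix.mul_smul,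
      smul_smul, hr, hVV]
    push_cast
    rfl

/-- **Signature matrix, sufficiency.** Let `n ≥ 2` and let `S ∈ ℂ^{n×n}` be self-adjoint
with zero diagonal and unimodular off-diagonal entries, satisfying `S² = c·S + (n−1)·I`
for some real `c`. Then there is a unique positive integer `d < n` with
`c = (n−2d)·√((n−1)/(d(n−d)))`, and `S` is the signature matrix of some ETF of size
`d × n`. -/
theorem signature_sufficiency (n : ℕ) (hn : 2 ≤ n) (c : ℝ)
    (S : Matrix (Fin n) (Fin n) ℂ)
    (hherm : Sᴴ = S) (hdiag : ∀ i, S i i = 0)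
    (hoff : ∀ i j, i ≠ j → ‖S i j‖ = 1)
    (hS2 : S ^ 2 = (c : ℂ) • S + ((n : ℂ) - 1) • 1) :
    ∃ d : ℕ, (0 < d ∧ d < n ∧
        c = ((n : ℝ) - 2 * d) * Real.sqrt (((n : ℝ) - 1) / (d * ((n : ℝ) - d)))) ∧
      (∀ d' : ℕ, 0 < d' → d' < n →
        c = ((n : ℝ) - 2 * d') * Real.sqrt (((n : ℝ) - 1) / (d' * ((n : ℝ) - d'))) →
        d' = d) ∧
      ∃ F : Matrix (Fin d) (Fin n) ℂ, IsSignatureOf S F := by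
  have hn1 : (1 : ℝ) < n := by exact_mod_cast hn
  obtain ⟨d, V, hVV, hVP, hcd⟩ := IsHermitian.exists_mul_conjTranspose_eq_one_of_sq_eq hherm
    (by simp [trace, hdiag]) (c := c) (q := n - 1) (by nlinarith) (by push_cast; exact hS2)
  rw [Fintype.card_fin] at hcd
  set Δ := Real.sqrt (c ^ 2 + 4 * ((n : ℝ) - 1))
  have hΔ : 0 < Δ := Real.sqrt_pos.mpr (by nlinarith)
  obtain ⟨hd, hdn⟩ := pos_and_lt_of_mul_eq_mul_sqrt hn1 hcd
  have hμ : etfMu d n = n / d * Δ⁻¹ :=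
    etfMu_eq_div_of_mul_eq_mul_sqrt (by exact_mod_cast hd) (by exact_mod_cast hdn) hcd
  have hb : etfMu d n * ((c - Δ) / 2) = -1 := by
    rw [hμ]
    field_simp
    linarith
  refine ⟨d, ⟨by exact_mod_cast hd, by exact_mod_cast hdn,
    (eq_welch_iff hn1.le hd hdn).mpr hcd⟩, fun d' hd' hd'n hc' => ?_, _,
    isSignatureOf_smul_of_mul_conjTranspose_eq_one hdiag hoff hVV hVP hμ hb⟩
  have hcd' := (eq_welch_iff hn1.le (by exact_mod_cast hd') (by exact_mod_cast hd'n)).mp hc'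
  have : (d' : ℝ) = d := by linarith [mul_right_cancel₀ hΔ.ne' (hcd'.symm.trans hcd)]
  exact_mod_cast this
end

section
/- (Naimark complement) If S is the signature matrix of an equiangular tight frame of size d × n with n > d ≥ 1, then −S is the signature matrix of some equiangular tight frame of size (n−d) × n. -/
open Matrix

/-!
Rescaling `F` by `√(d/n)` makes its rows orthonormal. Completing them to an orthonormal basis
of `ℂⁿ` and rescaling the `n - d` new rows by `√(n/(n-d))` gives a tight frame `G` with
`d • FᴴF + (n - d) • GᴴG = n • 1`, i.e. `GᴴG - 1 = -(d/(n-d)) • (FᴴF - 1)`. Since the Welch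
bounds satisfy `μ(n-d, n) = d/(n-d) • μ(d, n)`, `G` is equiangular and its signature is `-S`.
-/

section

variable {𝕜 : Type*} [RCLike 𝕜] {ι ι' κ : Type*} [Fintype ι] [Fintype ι'] [Fintype κ]
  [DecidableEq ι] [DecidableEq ι'] [DecidableEq κ]

theorem exists_complement_of_mul_conjTranspose_eq_one
    (hcard : Fintype.card ι + Fintype.card ι' = Fintype.card κ)
    (A : Matrix ι κ 𝕜) (hA : A * Aᴴ = 1) :
    ∃ B : Matrix ι' κ 𝕜, B * Bᴴ = 1 ∧ Aᴴ * A + Bᴴ * B = 1 := by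
  -- Conjugated rows, so that the change-of-basis matrix `hM` below is `fromCols Aᴴ Bᴴ`.
  let v : ι ⊕ ι' → EuclideanSpace 𝕜 κ := Sum.elim (fun i => WithLp.toLp 2 (star (A i))) 0
  have hv : Orthonormal 𝕜 (v ∘ Sum.inl) := by
    have hcols :
        (of fun k i => (EuclideanSpace.basisFun κ 𝕜).repr ((v ∘ Sum.inl) i) k) = Aᴴ := by
      ext k i
      simp [EuclideanSpace.basisFun_repr, v]
    rwa [← gram_eq_one_iff_orthonormal, gram_eq_conjTranspose_mul (EuclideanSpace.basisFun κ 𝕜),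
      hcols, conjTranspose_conjTranspose]
  have hv' : Orthonormal 𝕜 ((Set.range Sum.inl).domRestrict v) := by
    convert hv.comp _ (Equiv.ofInjective _ Sum.inl_injective).symm.injective
    ext ⟨_, i, rfl⟩ : 1
    simp
  obtain ⟨b, hb⟩ := hv'.exists_orthonormalBasis_extension_of_card_eq (by simpa using hcard.symm)
  set B : Matrix ι' κ 𝕜 := of fun i k => star (b (Sum.inr i) k)
  have hM : (EuclideanSpace.basisFun κ 𝕜).toBasis.toMatrix b = fromCols Aᴴ Bᴴ := by
    ext k (i | i)
    · simp [Module.Basis.toMatrix_apply, EuclideanSpace.basisFun_repr, hb _ ⟨i, rfl⟩, v]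
    · simp [Module.Basis.toMatrix_apply, EuclideanSpace.basisFun_repr, B]
  have h1 := (EuclideanSpace.basisFun κ 𝕜).toMatrix_orthonormalBasis_conjTranspose_mul_self b
  have h2 := (EuclideanSpace.basisFun κ 𝕜).toMatrix_orthonormalBasis_self_mul_conjTranspose b
  rw [hM, conjTranspose_fromCols_eq_fromRows_conjTranspose] at h1 h2
  rw [fromCols_mul_fromRows, conjTranspose_conjTranspose, conjTranspose_conjTranspose] at h2
  refine ⟨B, ?_, h2⟩
  rw [fromRows_mul_fromCols, conjTranspose_conjTranspose, conjTranspose_conjTranspose,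
    ← fromBlocks_one, fromBlocks_inj] at h1
  exact h1.2.2.2

theorem smul_sqrt_mul_conjTranspose {m n : Type*} [Fintype n]
    {x : ℝ} (hx : 0 ≤ x) (M : Matrix m n 𝕜) :
    ((√x : 𝕜) • M) * ((√x : 𝕜) • M)ᴴ = (x : 𝕜) • (M * Mᴴ) := by
  rw [conjTranspose_smul, RCLike.star_def, RCLike.conj_ofReal, Matrix.smul_mul, Matrix.mul_smul,
    smul_smul, ← RCLike.ofReal_mul, Real.mul_self_sqrt hx]

theorem conjTranspose_smul_sqrt_mul {m n : Type*} [Fintype m]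
    {x : ℝ} (hx : 0 ≤ x) (M : Matrix m n 𝕜) :
    ((√x : 𝕜) • M)ᴴ * ((√x : 𝕜) • M) = (x : 𝕜) • (Mᴴ * M) := by
  rw [conjTranspose_smul, RCLike.star_def, RCLike.conj_ofReal, Matrix.smul_mul, Matrix.mul_smul,
    smul_smul, ← RCLike.ofReal_mul, Real.mul_self_sqrt hx]

theorem exists_tight_frame_complement
    (hcard : Fintype.card ι + Fintype.card ι' = Fintype.card κ)
    (hι : Fintype.card ι ≠ 0) (hι' : Fintype.card ι' ≠ 0)
    (F : Matrix ι κ 𝕜) (hF : F * Fᴴ = ((Fintype.card κ : 𝕜) / Fintype.card ι) • 1) :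
    ∃ G : Matrix ι' κ 𝕜, G * Gᴴ = ((Fintype.card κ : 𝕜) / Fintype.card ι') • 1 ∧
      Gᴴ * G - 1 = -((Fintype.card ι : 𝕜) / Fintype.card ι') • (Fᴴ * F - 1) := by
  set d := Fintype.card ι
  set m := Fintype.card ι'
  set n := Fintype.card κ
  have hd : (d : 𝕜) ≠ 0 := Nat.cast_ne_zero.mpr hι
  have hm : (m : 𝕜) ≠ 0 := Nat.cast_ne_zero.mpr hι'
  have hn : (n : 𝕜) ≠ 0 := Nat.cast_ne_zero.mpr (by omega)
  have hdmn : (d : 𝕜) + m = n := by exact_mod_cast hcard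
  have hA : ((√(d / n : ℝ) : 𝕜) • F) * ((√(d / n : ℝ) : 𝕜) • F)ᴴ = 1 := by
    rw [smul_sqrt_mul_conjTranspose (by positivity), hF, smul_smul]
    convert one_smul 𝕜 (1 : Matrix ι ι 𝕜)
    push_cast
    field_simp
  obtain ⟨B, hB, hAB⟩ := exists_complement_of_mul_conjTranspose_eq_one hcard _ hA
  refine ⟨(√(n / m : ℝ) : 𝕜) • B, ?_, ?_⟩
  · rw [smul_sqrt_mul_conjTranspose (by positivity), hB]
    push_cast; rfl
  · rw [conjTranspose_smul_sqrt_mul (by positivity), eq_sub_of_add_eq' hAB,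
      conjTranspose_smul_sqrt_mul (by positivity)]
    push_cast
    match_scalars
    · field_simp
      linear_combination -hdmn
    · field_simp

end

theorem etfMu_complement {d n : ℕ} (hdn : d ≤ n) :
    etfMu (n - d) n = d / (n - d : ℕ) * etfMu d n := by
  have hsq : (d / (n - d : ℕ) : ℝ) ^ 2 * (((n : ℝ) - d) / (d * ((n : ℝ) - 1)))
      = ((n : ℝ) - (n - d : ℕ)) / ((n - d : ℕ) * ((n : ℝ) - 1)) := by
    push_cast [hdn]
    field_simp
    ring
  rw [etfMu, etfMu, ← hsq, Real.sqrt_mul (by positivity), Real.sqrt_sq (by positivity)]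

/-- **Naimark complement.** If `S` is the signature matrix of an ETF of size `d × n` with
`n > d ≥ 1`, then `−S` is the signature matrix of some ETF of size `(n−d) × n`. -/
theorem naimark_complement (d n : ℕ) (hd : 1 ≤ d) (hdn : d < n)
    (F : Matrix (Fin d) (Fin n) ℂ) (S : Matrix (Fin n) (Fin n) ℂ)
    (hS : IsSignatureOf S F) :
    ∃ G : Matrix (Fin (n - d)) (Fin n) ℂ, IsSignatureOf (-S) G := by
  obtain ⟨⟨hdiag, hoff, hFF⟩, rfl⟩ := hS
  simp only [Fintype.card_fin] at hdiag hoff hFF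
  obtain ⟨G, hGG, hgram⟩ := exists_tight_frame_complement (ι' := Fin (n - d))
    (by simp; omega) (by simp; omega) (by simp; omega) F (by simpa using hFF)
  simp only [Fintype.card_fin] at hGG hgram
  have hc : (d : ℂ) / (n - d : ℕ) ≠ 0 :=
    div_ne_zero (Nat.cast_ne_zero.mpr (by omega)) (Nat.cast_ne_zero.mpr (by omega))
  refine ⟨G, ?_⟩
  simp only [IsSignatureOf, IsETF, Fintype.card_fin]
  refine ⟨⟨fun j => ?_, fun j k hjk => ?_, by simpa using hGG⟩, ?_⟩
  · simpa [hdiag, sub_eq_zero] using congrFun (congrFun hgram j) j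
  · have hjk' := congrFun (congrFun hgram j) k
    simp only [Matrix.sub_apply, Matrix.smul_apply, one_apply_ne hjk, sub_zero] at hjk'
    rw [hjk', smul_eq_mul, norm_mul, norm_neg, hoff j k hjk, etfMu_complement hdn.le, norm_div,
      Complex.norm_natCast, Complex.norm_natCast]
  · rw [etfMu_complement hdn.le, hgram, smul_smul]
    push_cast
    rw [_root_.mul_inv_rev, mul_assoc, mul_neg, inv_mul_cancel₀ hc, mul_neg_one, neg_smul]
end

section
/- Let n ≥ 2, let c be a real number with |c| ≤ 1, let β = −c + ε·i·√(1−c²) for ε = ±1, and let S ∈ ℂ^{n×n} satisfy S = S* and S² = c·S + (n−1)·I. Then the 2n × 2n block matrix Σ = [[S, S + β·I], [S + β̄·I, −S]] satisfies Σ = Σ* and Σ² = (2n−1)·I. -/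
open Matrix

/-!
Since `S` commutes with `S + βI`, the off-diagonal blocks of `Σ²` vanish and each diagonal block
is `2S² + (β + β̄)S + ββ̄ I`. The number `β` lies on the unit circle and has real part `-c`, so
`β + β̄ = -2c` cancels the linear term and the block is `2(n - 1)I + I`.
-/

section DoubledBlock

variable {R : Type*} {m : Type*} [DecidableEq m]

theorem conjTranspose_fromBlocks_shift_eq [CommRing R] [StarRing R]
    {S : Matrix m m R} (hS : Sᴴ = S) (β : R) :
    (fromBlocks S (S + β • 1) (S + star β • 1) (-S))ᴴ =
      fromBlocks S (S + β • 1) (S + star β • 1) (-S) := by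
  simp only [fromBlocks_conjTranspose, conjTranspose_add, conjTranspose_smul,
    conjTranspose_one, conjTranspose_neg, star_star, hS]

theorem fromBlocks_shift_sq [Fintype m] [CommRing R] {S : Matrix m m R} {c d : R}
    (hS : S ^ 2 = c • S + d • 1) {β β' : R} (hsum : β + β' = -2 * c) :
    fromBlocks S (S + β • 1) (S + β' • 1) (-S) ^ 2 = (2 * d + β * β') • 1 := by
  obtain rfl : β' = -2 * c - β := by linear_combination hsum
  have hSS : S * S = c • S + d • 1 := by rw [← sq, hS]
  rw [sq, fromBlocks_multiply, ← fromBlocks_one, fromBlocks_smul, fromBlocks_inj]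
  refine ⟨?_, ?_, ?_, ?_⟩ <;>
    simp only [Matrix.mul_add, Matrix.add_mul, Matrix.smul_mul, Matrix.mul_smul,
      Matrix.mul_one, Matrix.one_mul, Matrix.neg_mul, Matrix.mul_neg, neg_neg,
      smul_add, smul_smul, smul_neg, hSS, smul_zero] <;>
    match_scalars <;>
    ring

end DoubledBlock

section UnitCircle

variable {c ε : ℝ} {β : ℂ}

theorem add_conj_of_eq_neg_add_sqrt
    (hβ : β = -(c : ℂ) + (ε : ℂ) * Complex.I * ((Real.sqrt (1 - c ^ 2) : ℝ) : ℂ)) :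
    β + starRingEnd ℂ β = -2 * (c : ℂ) := by
  rw [Complex.add_conj, hβ]
  simp

theorem mul_conj_of_eq_neg_add_sqrt (hc : |c| ≤ 1) (hε : ε = 1 ∨ ε = -1)
    (hβ : β = -(c : ℂ) + (ε : ℂ) * Complex.I * ((Real.sqrt (1 - c ^ 2) : ℝ) : ℂ)) :
    β * starRingEnd ℂ β = 1 := by
  have hsq : Real.sqrt (1 - c ^ 2) ^ 2 = 1 - c ^ 2 :=
    Real.sq_sqrt (sub_nonneg.2 ((sq_le_one_iff_abs_le_one c).2 hc))
  have hε2 : ε ^ 2 = 1 := by rcases hε with rfl | rfl <;> norm_num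
  rw [Complex.mul_conj, Complex.ofReal_eq_one, Complex.normSq_apply, hβ]
  simp only [Complex.add_re, Complex.add_im, Complex.neg_re, Complex.neg_im, Complex.ofReal_re,
    Complex.ofReal_im, Complex.mul_re, Complex.mul_im, Complex.I_re, Complex.I_im]
  linear_combination ε ^ 2 * hsq + (1 - c ^ 2) * hε2

end UnitCircle

theorem doubled_block_identity_general (n : ℕ)
    (c : ℝ) (hc1 : |c| ≤ 1)
    (ε : ℝ) (hε : ε = 1 ∨ ε = -1)
    (β : ℂ) (hβ : β = -(c : ℂ) + (ε : ℂ) * Complex.I * ((Real.sqrt (1 - c ^ 2) : ℝ) : ℂ))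
    (S : Matrix (Fin n) (Fin n) ℂ)
    (hherm : Sᴴ = S)
    (hS2 : S ^ 2 = (c : ℂ) • S + ((n : ℂ) - 1) • 1) :
    (Matrix.fromBlocks S (S + β • 1) (S + (starRingEnd ℂ β) • 1) (-S))ᴴ =
        Matrix.fromBlocks S (S + β • 1) (S + (starRingEnd ℂ β) • 1) (-S) ∧
      (Matrix.fromBlocks S (S + β • 1) (S + (starRingEnd ℂ β) • 1) (-S)) ^ 2 =
        (2 * (n : ℂ) - 1) • 1 := by
  refine ⟨conjTranspose_fromBlocks_shift_eq hherm β, ?_⟩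
  rw [fromBlocks_shift_sq hS2 (add_conj_of_eq_neg_add_sqrt hβ),
    mul_conj_of_eq_neg_add_sqrt hc1 hε hβ]
  congr 1
  ring

/-- For `n ≥ 2`, a real `c` with `|c| ≤ 1`, `β = −c + ε·i·√(1−c²)` with `ε = ±1`, and a
self-adjoint `S ∈ ℂ^{n×n}` with `S² = c·S + (n−1)·I`, the `2n × 2n` block matrix
`Σ = [[S, S+βI], [S+β̄I, −S]]` satisfies `Σ = Σᴴ` and `Σ² = (2n−1)·I`. -/
theorem doubled_block_identity (n : ℕ) (hn : 2 ≤ n)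
    (c : ℝ) (hc1 : |c| ≤ 1)
    (ε : ℝ) (hε : ε = 1 ∨ ε = -1)
    (β : ℂ) (hβ : β = -(c : ℂ) + (ε : ℂ) * Complex.I * ((Real.sqrt (1 - c ^ 2) : ℝ) : ℂ))
    (S : Matrix (Fin n) (Fin n) ℂ)
    (hherm : Sᴴ = S)
    (hS2 : S ^ 2 = (c : ℂ) • S + ((n : ℂ) - 1) • 1) :
    (Matrix.fromBlocks S (S + β • 1) (S + (starRingEnd ℂ β) • 1) (-S))ᴴ =
        Matrix.fromBlocks S (S + β • 1) (S + (starRingEnd ℂ β) • 1) (-S) ∧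
      (Matrix.fromBlocks S (S + β • 1) (S + (starRingEnd ℂ β) • 1) (-S)) ^ 2 =
        (2 * (n : ℂ) - 1) • 1 :=
  doubled_block_identity_general n c hc1 ε hε β hβ S hherm hS2
end

section
/- If there exists a real or complex equiangular tight frame of size d × 2d, then for every nonnegative integer k there exists a complex equiangular tight frame of size 2^k·d × 2^{k+1}·d. -/
open Matrix

/-!
An `m × 2m` ETF `Φ` is encoded by its signature matrix `S = μ⁻¹(ΦᴴΦ − 1)`, a Hermitian conference
matrix: zero diagonal, unimodular off-diagonal entries and `S² = (2m − 1)I`. Conversely, every such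
`S` comes from an ETF: `G = 1 + μS` satisfies `G² = 2G` and has trace `2m`, so `G/2` is an
orthogonal projection of rank `m` and factors as `G = FᴴF` with `FFᴴ = 2I`. Finally, the block
matrix `[[S, 1 + iS], [1 − iS, −S]]` is again a Hermitian conference matrix, of twice the order, so
the signature of the given ETF can be doubled `k` times.
-/

lemma one_add_mul_self_eq_add_iff {R : Type*} [Ring R] (x : R) :
    (1 + x) * (1 + x) = (1 + x) + (1 + x) ↔ x * x = 1 := by
  have h : (1 + x) * (1 + x) - ((1 + x) + (1 + x)) = x * x - 1 := by noncomm_ring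
  rw [← sub_eq_zero, h, sub_eq_zero]

lemma etfMu_nonneg {d n : ℕ} : 0 ≤ etfMu d n := Real.sqrt_nonneg _

lemma etfMu_two_mul_sq_mul {m : ℕ} (hm : 0 < m) : etfMu m (2 * m) ^ 2 * (2 * m - 1) = 1 := by
  have hm1 : (1 : ℝ) ≤ m := by exact_mod_cast hm
  have h2m1 : (2 * m : ℝ) - 1 ≠ 0 := by linarith
  rw [etfMu, Real.sq_sqrt (div_nonneg (by push_cast; linarith) (by push_cast; nlinarith))]
  push_cast
  field_simp
  ring

namespace Matrix.IsHermitian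

variable {κ : Type*} [Fintype κ] [DecidableEq κ] {G : Matrix κ κ ℂ} {c : ℝ}

lemma eigenvalues_eq_zero_or_eq (hG : G.IsHermitian) (hGG : G * G = (c : ℂ) • G) (j : κ) :
    hG.eigenvalues j = 0 ∨ hG.eigenvalues j = c := by
  set v := ⇑(hG.eigenvectorBasis j)
  have hv : v ≠ 0 := by
    simpa [v] using hG.eigenvectorBasis.orthonormal.ne_zero j
  have key : (hG.eigenvalues j * hG.eigenvalues j) • v = (c * hG.eigenvalues j) • v := by
    calc _ = (G * G) *ᵥ v := by
          rw [← mulVec_mulVec, hG.mulVec_eigenvectorBasis, mulVec_smul,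
            hG.mulVec_eigenvectorBasis, smul_smul]
      _ = _ := by
          rw [hGG, smul_mulVec, hG.mulVec_eigenvectorBasis, Complex.coe_smul, smul_smul]
  rcases mul_eq_mul_right_iff.mp (smul_left_injective ℝ hv key) with h | h
  · exact Or.inr h
  · exact Or.inl h

lemma trace_eq_mul_card_eigenvalues_ne_zero (hG : G.IsHermitian) (hGG : G * G = (c : ℂ) • G) :
    G.trace = c * Fintype.card {j // hG.eigenvalues j ≠ 0} := by
  have hev : ∀ j, (hG.eigenvalues j : ℂ) = if hG.eigenvalues j ≠ 0 then (c : ℂ) else 0 := by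
    intro j
    rcases hG.eigenvalues_eq_zero_or_eq hGG j with h | h <;> simp [h]
  calc G.trace = ∑ j, if hG.eigenvalues j ≠ 0 then (c : ℂ) else 0 := by
        rw [hG.trace_eq_sum_eigenvalues]
        exact Finset.sum_congr rfl fun j _ => hev j
    _ = _ := by simp [Finset.sum_ite, Fintype.card_subtype, mul_comm]

lemma apply_eq_sum_eigenvalues (hG : G.IsHermitian) (j k : κ) :
    G j k = ∑ i, hG.eigenvalues i * hG.eigenvectorUnitary j i *
      star (hG.eigenvectorUnitary k i) := by
  conv_lhs => rw [hG.spectral_theorem, Unitary.conjStarAlgAut_apply, mul_apply]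
  congr 1 with i
  rw [mul_diagonal, star_apply]
  simp [mul_comm]

theorem exists_conjTranspose_mul_self_eq (hG : G.IsHermitian) (hc : 0 < c)
    (hGG : G * G = (c : ℂ) • G) {d : ℕ} (htr : G.trace = c * d) :
    ∃ F : Matrix (Fin d) κ ℂ, Fᴴ * F = G ∧ F * Fᴴ = (c : ℂ) • 1 := by
  have hcard : Fintype.card {j // hG.eigenvalues j ≠ 0} = d := by
    have := (hG.trace_eq_mul_card_eigenvalues_ne_zero hGG).symm.trans htr
    exact_mod_cast mul_left_cancel₀ (Complex.ofReal_ne_zero.mpr hc.ne') this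
  set U : Matrix κ κ ℂ := (hG.eigenvectorUnitary : Matrix κ κ ℂ)
  set σ : Fin d ≃ {j // hG.eigenvalues j ≠ 0} := (Fintype.equivFinOfCardEq hcard).symm
  -- the columns of `V` are the eigenvectors of `G` for the eigenvalue `c`
  set V : Matrix κ (Fin d) ℂ := U.submatrix id fun p => σ p
  have hsqrt : (Real.sqrt c : ℂ) * Real.sqrt c = c := by
    rw [← Complex.ofReal_mul, Real.mul_self_sqrt hc.le]
  refine ⟨(Real.sqrt c : ℂ) • Vᴴ, ?_, ?_⟩
  · rw [conjTranspose_smul, conjTranspose_conjTranspose, Matrix.smul_mul, Matrix.mul_smul,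
      smul_smul, Complex.star_def, Complex.conj_ofReal, hsqrt]
    ext j k
    have hterm : ∀ i, (hG.eigenvalues i : ℂ) * U j i * star (U k i) =
        if hG.eigenvalues i ≠ 0 then (c : ℂ) * (U j i * star (U k i)) else 0 := by
      intro i
      rcases hG.eigenvalues_eq_zero_or_eq hGG i with h | h <;> simp [h, hc.ne', mul_assoc]
    rw [hG.apply_eq_sum_eigenvalues, Finset.sum_congr rfl fun i _ => hterm i,
      ← Finset.sum_filter, ← Finset.sum_subtype_eq_sum_filter, Finset.subtype_univ, ← σ.sum_comp,
      smul_apply, mul_apply, Finset.smul_sum]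
    rfl
  · rw [conjTranspose_smul, Matrix.smul_mul, Matrix.mul_smul, smul_smul, Complex.star_def,
      Complex.conj_ofReal, hsqrt, conjTranspose_conjTranspose, conjTranspose_submatrix,
      ← submatrix_mul _ _ _ _ _ Function.bijective_id, ← star_eq_conjTranspose,
      Unitary.coe_star_mul_self,
      submatrix_one (fun p => (σ p : κ)) (Subtype.val_injective.comp σ.injective)]

end Matrix.IsHermitian

section

open Complex

structure IsHermitianConference {κ : Type*} [Fintype κ] [DecidableEq κ] (S : Matrix κ κ ℂ) :
    Prop where
  isHermitian : S.IsHermitian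
  diag_eq_zero : ∀ j, S j j = 0
  norm_apply_eq_one : ∀ j k, j ≠ k → ‖S j k‖ = 1
  mul_self : S * S = ((Fintype.card κ : ℂ) - 1) • 1

namespace IsHermitianConference

variable {κ : Type*} [Fintype κ] [DecidableEq κ] {S : Matrix κ κ ℂ}

lemma submatrix {κ' : Type*} [Fintype κ'] [DecidableEq κ'] (hS : IsHermitianConference S)
    (e : κ' ≃ κ) : IsHermitianConference (S.submatrix e e) where
  isHermitian := hS.isHermitian.submatrix e
  diag_eq_zero j := hS.diag_eq_zero (e j)
  norm_apply_eq_one j k hjk := hS.norm_apply_eq_one (e j) (e k) (e.injective.ne hjk)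
  mul_self := by
    rw [submatrix_mul_equiv, hS.mul_self, Fintype.card_congr e, ← submatrix_one_equiv e]
    rfl

lemma norm_one_add_smul_apply (hS : IsHermitianConference S) {z : ℂ} (hz : ‖z‖ = 1) (j k : κ) :
    ‖(1 + z • S) j k‖ = 1 := by
  rcases eq_or_ne j k with rfl | hjk
  · simp [hS.diag_eq_zero]
  · simp [one_apply_ne hjk, hz, hS.norm_apply_eq_one j k hjk]

lemma fromBlocks (hS : IsHermitianConference S) :
    IsHermitianConference (Matrix.fromBlocks S (1 + I • S) (1 + (-I) • S) (-S)) where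
  isHermitian := by
    refine hS.isHermitian.fromBlocks ?_ hS.isHermitian.neg
    rw [conjTranspose_add, conjTranspose_one, conjTranspose_smul, hS.isHermitian.eq, star_def,
      conj_I]
  diag_eq_zero j := by rcases j with j | j <;> simp [hS.diag_eq_zero]
  norm_apply_eq_one j k hjk := by
    rcases j with j | j <;> rcases k with k | k
    · exact hS.norm_apply_eq_one j k (by simpa using hjk)
    · exact hS.norm_one_add_smul_apply (by simp) j k
    · exact hS.norm_one_add_smul_apply (by simp) j k
    · simpa using hS.norm_apply_eq_one j k (by simpa using hjk)
  mul_self := by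
    rw [fromBlocks_multiply, Fintype.card_sum, ← fromBlocks_one, fromBlocks_smul, smul_zero]
    congr 1 <;>
      simp only [mul_add, add_mul, Matrix.mul_smul, Matrix.smul_mul, smul_smul, mul_one, one_mul,
        Matrix.neg_mul, neg_neg, mul_neg, hS.mul_self] <;> push_cast <;>
      match_scalars <;> ring_nf <;> simp only [I_sq] <;> ring

end IsHermitianConference

lemma IsSignatureOf.isHermitianConference {ι κ : Type} [Fintype ι] [Fintype κ] [DecidableEq ι]
    [DecidableEq κ] {S : Matrix κ κ ℂ} {Φ : Matrix ι κ ℂ} (hS : IsSignatureOf S Φ)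
    (hι : 0 < Fintype.card ι) (hκ : Fintype.card κ = 2 * Fintype.card ι) :
    IsHermitianConference S := by
  obtain ⟨⟨hdiag, hoff, htight⟩, rfl⟩ := hS
  rw [hκ] at hoff htight ⊢
  set μ := etfMu (Fintype.card ι) (2 * Fintype.card ι)
  have hμ : μ ^ 2 * (2 * Fintype.card ι - 1) = 1 := etfMu_two_mul_sq_mul hι
  have hμ0 : μ ≠ 0 := by
    rintro h
    simp [h] at hμ
  set A := Φᴴ * Φ
  have hA : (1 + (A - 1)) * (1 + (A - 1)) = (1 + (A - 1)) + (1 + (A - 1)) := by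
    have h2 : ((2 * Fintype.card ι : ℕ) : ℂ) / (Fintype.card ι : ℂ) = 2 := by
      have : (Fintype.card ι : ℂ) ≠ 0 := Nat.cast_ne_zero.mpr hι.ne'
      push_cast
      field_simp
    rw [add_sub_cancel, ← two_smul ℂ A]
    calc A * A = Φᴴ * (Φ * Φᴴ) * Φ := by simp only [A, Matrix.mul_assoc]
      _ = (2 : ℂ) • A := by rw [htight, h2, Matrix.mul_smul, Matrix.mul_one, Matrix.smul_mul]
  refine ⟨?_, fun j => ?_, fun j k hjk => ?_, ?_⟩
  · exact ((isHermitian_conjTranspose_mul_self Φ).sub isHermitian_one).smul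
      (by rw [IsSelfAdjoint, ← ofReal_inv]; exact conj_ofReal _)
  · simp [hdiag j]
  · rw [Matrix.smul_apply, Matrix.sub_apply, one_apply_ne hjk, sub_zero, smul_eq_mul, norm_mul,
      norm_inv, hoff j k hjk, norm_real, Real.norm_of_nonneg etfMu_nonneg, inv_mul_cancel₀ hμ0]
  · rw [Matrix.smul_mul, Matrix.mul_smul, smul_smul, (one_add_mul_self_eq_add_iff _).mp hA,
      ← ofReal_inv, ← ofReal_mul]
    have hμinv : μ⁻¹ * μ⁻¹ = 2 * Fintype.card ι - 1 := by
      field_simp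
      linear_combination -hμ
    rw [hμinv, hκ]
    push_cast
    rfl

lemma IsHermitianConference.exists_isETF {κ : Type} [Fintype κ] [DecidableEq κ]
    {S : Matrix κ κ ℂ} (hS : IsHermitianConference S) {m : ℕ} (hm : 0 < m)
    (hκ : Fintype.card κ = 2 * m) : ∃ F : Matrix (Fin m) κ ℂ, IsETF F := by
  set μ := etfMu m (2 * m)
  have hμ : μ ^ 2 * (2 * m - 1) = 1 := etfMu_two_mul_sq_mul hm
  set G : Matrix κ κ ℂ := 1 + (μ : ℂ) • S
  have hG : G.IsHermitian := isHermitian_one.add (hS.isHermitian.smul (conj_ofReal μ))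
  have hGG : G * G = ((2 : ℝ) : ℂ) • G := by
    rw [ofReal_ofNat, two_smul, one_add_mul_self_eq_add_iff, Matrix.smul_mul, Matrix.mul_smul,
      smul_smul, hS.mul_self, hκ, smul_smul]
    convert one_smul ℂ (1 : Matrix κ κ ℂ)
    exact_mod_cast (by linear_combination hμ : μ * μ * (2 * m - 1) = 1)
  have htr : G.trace = (2 : ℝ) * m := by
    simp [G, trace, hS.diag_eq_zero, hκ]
  obtain ⟨F, hFG, hFF⟩ := hG.exists_conjTranspose_mul_self_eq two_pos hGG htr
  refine ⟨F, fun j => ?_, fun j k hjk => ?_, ?_⟩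
  · simp [hFG, G, hS.diag_eq_zero]
  · simp [hFG, G, one_apply_ne hjk, hS.norm_apply_eq_one j k hjk, hκ]
    exact abs_of_nonneg etfMu_nonneg
  · rw [hFF, Fintype.card_fin, hκ]
    congr 1
    have : (m : ℂ) ≠ 0 := Nat.cast_ne_zero.mpr hm.ne'
    push_cast
    field_simp

end

/-- If there exists a real or complex ETF of size `d × 2d`, then for every `k` there
exists a complex ETF of size `2^k·d × 2^{k+1}·d`. -/
theorem etf_repeated_doubling (d : ℕ) (hd : 0 < d)
    (h : (∃ F : Matrix (Fin d) (Fin (2 * d)) ℝ, IsETF (F.map ((↑) : ℝ → ℂ))) ∨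
      (∃ F : Matrix (Fin d) (Fin (2 * d)) ℂ, IsETF F)) :
    ∀ k : ℕ, ∃ Φ : Matrix (Fin (2 ^ k * d)) (Fin (2 ^ (k + 1) * d)) ℂ, IsETF Φ := by
  obtain ⟨Φ, hΦ⟩ : ∃ Φ : Matrix (Fin d) (Fin (2 * d)) ℂ, IsETF Φ :=
    h.elim (fun ⟨F, hF⟩ => ⟨_, hF⟩) id
  have hconference : ∀ k, ∃ S : Matrix (Fin (2 ^ (k + 1) * d)) (Fin (2 ^ (k + 1) * d)) ℂ,
      IsHermitianConference S := by
    intro k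
    induction k with
    | zero =>
      have hS := IsSignatureOf.isHermitianConference ⟨hΦ, rfl⟩ (by simpa using hd) (by simp)
      exact ⟨_, hS.submatrix (finCongr (by ring))⟩
    | succ k ih =>
      obtain ⟨S, hS⟩ := ih
      exact ⟨_, hS.fromBlocks.submatrix ((finCongr (by ring)).trans finSumFinEquiv.symm)⟩
  intro k
  obtain ⟨S, hS⟩ := hconference k
  exact hS.exists_isETF (by positivity) (by rw [Fintype.card_fin]; ring)
end
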